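/- arXiv:2304.04739 — 14 statements merged into one kernel-verified Lean document; each statement's English description precedes it below -/
import Mathlib

section
/- If s : ℕ → R is a function into a commutative ring R with s(0) = 0, s(n) a non-zero-divisor for all n > 0, and s(n-k) ∣ s(n) - s(k) for all n > k > 0, then for all n ≥ k ≥ 0 the s-binomial coefficient binom(n,k)_s = n!_s / (k!_s * (n-k)!_s) is an element of R (i.e., k!_s * (n-k)!_s divides n!_s in R), and for n > k > 0 the s-Pascal identity holds: binom(n,k)_s = binom(n-1,k-1)_s + ((s(n)-s(k))/s(n-k)) * binom(n-1,k)_s. -/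
/-!
Fix quotients `q n k` with `s n - s k = s (n - k) * q n k`, as allowed by the divisibility
hypothesis, and *define* the s-binomial coefficients by the s-Pascal recursion with these
quotients. The factorial identity `k!ₛ (n-k)!ₛ C(n,k) = n!ₛ` then follows by induction on `n`:
the two Pascal terms contribute `s (k+1) · n!ₛ` and `s (n-k) q · n!ₛ = (s (n+1) - s (k+1)) · n!ₛ`.
-/

open Finset

namespace SPascal

variable {R : Type*} [CommRing R]

def sChoose (q : ℕ → ℕ → R) : ℕ → ℕ → R
  | _, 0 => 1
  | 0, _ + 1 => 0
  | n + 1, k + 1 => sChoose q n k + q (n + 1) (k + 1) * sChoose q n (k + 1)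

variable (q : ℕ → ℕ → R)

@[simp]
theorem sChoose_zero_right (n : ℕ) : sChoose q n 0 = 1 := by
  cases n <;> rfl

theorem sChoose_succ_succ (n k : ℕ) :
    sChoose q (n + 1) (k + 1) = sChoose q n k + q (n + 1) (k + 1) * sChoose q n (k + 1) :=
  rfl

theorem sChoose_eq_zero_of_lt : ∀ {n k : ℕ}, n < k → sChoose q n k = 0
  | 0, _ + 1, _ => rfl
  | n + 1, k + 1, h => by
    rw [sChoose_succ_succ, sChoose_eq_zero_of_lt (by omega), sChoose_eq_zero_of_lt (by omega),
      mul_zero, add_zero]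

@[simp]
theorem sChoose_self : ∀ n : ℕ, sChoose q n n = 1
  | 0 => rfl
  | n + 1 => by
    rw [sChoose_succ_succ, sChoose_self n, sChoose_eq_zero_of_lt q n.lt_succ_self, mul_zero,
      add_zero]

theorem prod_mul_prod_mul_sChoose (s : ℕ → R)
    (hq : ∀ n k, 0 < k → k < n → s n - s k = s (n - k) * q n k) :
    ∀ {n k : ℕ}, k ≤ n →
      (∏ i ∈ range k, s (i + 1)) * (∏ i ∈ range (n - k), s (i + 1)) * sChoose q n k
        = ∏ i ∈ range n, s (i + 1)
  | _, 0, _ => by simp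
  | 0, _ + 1, h => absurd h (by omega)
  | n + 1, k + 1, h => by
    obtain rfl | hkn := (Nat.le_of_succ_le_succ h).eq_or_lt
    · simp
    obtain ⟨m, hm⟩ : ∃ m, n - k = m + 1 := ⟨n - k - 1, by omega⟩
    have hleft := prod_mul_prod_mul_sChoose s hq (n := n) (k := k) (by omega)
    have hright := prod_mul_prod_mul_sChoose s hq (n := n) (k := k + 1) hkn
    have hquot := hq (n + 1) (k + 1) (by omega) (by omega)
    rw [Nat.add_sub_add_right, hm] at hquot
    rw [show n - (k + 1) = m by omega] at hright
    rw [hm] at hleft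
    rw [Nat.add_sub_add_right, hm, sChoose_succ_succ]
    simp only [prod_range_succ] at hleft hright ⊢
    linear_combination s (k + 1) * hleft + s (m + 1) * q (n + 1) (k + 1) * hright
      - (∏ i ∈ range n, s (i + 1)) * hquot

end SPascal

open Finset in
theorem s_pascal_identity_general {R : Type*} [CommRing R] (s : ℕ → R)
    (hdvd : ∀ n k : ℕ, 0 < k → k < n → s (n - k) ∣ s n - s k) :
    ∃ B : ℕ → ℕ → R,
      (∀ n k : ℕ, k ≤ n →
        (∏ i ∈ range k, s (i + 1)) * (∏ i ∈ range (n - k), s (i + 1)) * B n k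
          = ∏ i ∈ range n, s (i + 1)) ∧
      (∀ n k : ℕ, 0 < k → k < n →
        s (n - k) * B n k
          = s (n - k) * B (n - 1) (k - 1) + (s n - s k) * B (n - 1) k) := by
  choose! q hq using hdvd
  refine ⟨SPascal.sChoose q, fun _ _ => SPascal.prod_mul_prod_mul_sChoose q s hq, ?_⟩
  intro n k hk hkn
  obtain ⟨n, rfl⟩ := Nat.exists_eq_add_one.mpr (hk.trans hkn)
  obtain ⟨k, rfl⟩ := Nat.exists_eq_add_one.mpr hk
  rw [Nat.add_sub_cancel, Nat.add_sub_cancel, SPascal.sChoose_succ_succ, hq _ _ hk hkn]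
  ring

open Finset in
/-- s-binomial coefficients lie in `R` and satisfy the s-Pascal identity. -/
theorem s_pascal_identity {R : Type*} [CommRing R] (s : ℕ → R)
    (h0 : s 0 = 0)
    (hreg : ∀ n : ℕ, 0 < n → s n ∈ nonZeroDivisors R)
    (hdvd : ∀ n k : ℕ, 0 < k → k < n → s (n - k) ∣ s n - s k) :
    ∃ B : ℕ → ℕ → R,
      (∀ n k : ℕ, k ≤ n →
        (∏ i ∈ range k, s (i + 1)) * (∏ i ∈ range (n - k), s (i + 1)) * B n k
          = ∏ i ∈ range n, s (i + 1)) ∧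
      (∀ n k : ℕ, 0 < k → k < n →
        s (n - k) * B n k
          = s (n - k) * B (n - 1) (k - 1) + (s n - s k) * B (n - 1) k) :=
  s_pascal_identity_general s hdvd
end

section
/- Let s be a generalized n-series over a commutative ring R. For all a, b ∈ ℕ, if a ∣ b then s(a) ∣ s(b). -/
/-! Modulo `s a`, the sequence `s` is `a`-periodic, since `s (n + a) - s n` is divisible by
`s ((n + a) - n) = s a`; hence `s (a * m) ≡ s 0 = 0`. -/

theorem dvd_apply_mul_sub_apply_zero_of_forall_dvd_apply_add_sub {R : Type*} [CommRing R]
    {s : ℕ → R} {a : ℕ} (h : ∀ n, s a ∣ s (n + a) - s n) (m : ℕ) :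
    s a ∣ s (a * m) - s 0 := by
  let f := Ideal.Quotient.mk (Ideal.span {s a}) ∘ s
  have hf : Function.Periodic f a := fun n =>
    Ideal.Quotient.eq.mpr (Ideal.mem_span_singleton.mpr (h n))
  rw [← Ideal.mem_span_singleton, ← Ideal.Quotient.eq, mul_comm]
  exact hf.nat_mul_eq m

theorem GNS_dvd_general {R : Type*} [CommRing R] (s : ℕ → R)
    (h0 : s 0 = 0)
    (hdvd : ∀ n k : ℕ, 0 < k → k < n → s (n - k) ∣ s n - s k)
    (a b : ℕ) (hab : a ∣ b) : s a ∣ s b := by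
  obtain ⟨m, rfl⟩ := hab
  have step : ∀ n, s a ∣ s (n + a) - s n := by
    intro n
    rcases n.eq_zero_or_pos with rfl | hn
    · simp [h0]
    rcases a.eq_zero_or_pos with rfl | ha
    · simp
    simpa using hdvd (n + a) n hn (by omega)
  simpa [h0] using dvd_apply_mul_sub_apply_zero_of_forall_dvd_apply_add_sub step m

/-- For a generalized n-series `s`, if `a ∣ b` then `s a ∣ s b`. -/
theorem GNS_dvd {R : Type*} [CommRing R] (s : ℕ → R)
    (h0 : s 0 = 0)
    (hreg : ∀ n : ℕ, 0 < n → s n ∈ nonZeroDivisors R)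
    (hdvd : ∀ n k : ℕ, 0 < k → k < n → s (n - k) ∣ s n - s k)
    (a b : ℕ) (hab : a ∣ b) : s a ∣ s b :=
  GNS_dvd_general s h0 hdvd a b hab
end

section
/- Let s be a generalized n-series over a commutative ring R. For all a, b, n ∈ ℕ, if a ≡ b (mod n) then s(a) ≡ s(b) (mod s(n)), i.e., s(n) divides s(a) - s(b) in R. -/
/-! Since `s (m + n) ≡ s m (mod s n)` (the defining divisibility, with `s 0 = 0` covering `m = 0`),
iterating gives `s a ≡ s (a % n) (mod s n)`, and `a % n = b % n` finishes. -/

section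

variable {R : Type*} [CommRing R] {s : ℕ → R}

theorem dvd_sub_add_right (h0 : s 0 = 0)
    (hdvd : ∀ n k : ℕ, 0 < k → k < n → s (n - k) ∣ s n - s k) (m n : ℕ) :
    s n ∣ s (m + n) - s m := by
  rcases Nat.eq_zero_or_pos n with rfl | hn
  · simp
  rcases Nat.eq_zero_or_pos m with rfl | hm
  · simp [h0]
  simpa using hdvd (m + n) m hm (by omega)

theorem dvd_sub_add_mul (h0 : s 0 = 0)
    (hdvd : ∀ n k : ℕ, 0 < k → k < n → s (n - k) ∣ s n - s k) (m n q : ℕ) :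
    s n ∣ s (m + n * q) - s m := by
  induction q with
  | zero => simp
  | succ q ih =>
    have hstep := dvd_sub_add_right h0 hdvd (m + n * q) n
    rw [mul_add_one, ← add_assoc]
    simpa using hstep.add ih

theorem dvd_sub_mod (h0 : s 0 = 0)
    (hdvd : ∀ n k : ℕ, 0 < k → k < n → s (n - k) ∣ s n - s k) (a n : ℕ) :
    s n ∣ s a - s (a % n) := by
  simpa [Nat.mod_add_div] using dvd_sub_add_mul h0 hdvd (a % n) n (a / n)

end

theorem GNS_congruence_general {R : Type*} [CommRing R] (s : ℕ → R)
    (h0 : s 0 = 0)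
    (hdvd : ∀ n k : ℕ, 0 < k → k < n → s (n - k) ∣ s n - s k)
    (a b n : ℕ) (hab : a % n = b % n) : s n ∣ s a - s b := by
  have ha := dvd_sub_mod h0 hdvd a n
  have hb := dvd_sub_mod h0 hdvd b n
  rw [hab] at ha
  simpa using ha.sub hb

/-- For a generalized n-series `s`, if `a ≡ b (mod n)` then `s a ≡ s b (mod s n)`. -/
theorem GNS_congruence {R : Type*} [CommRing R] (s : ℕ → R)
    (h0 : s 0 = 0)
    (hreg : ∀ n : ℕ, 0 < n → s n ∈ nonZeroDivisors R)
    (hdvd : ∀ n k : ℕ, 0 < k → k < n → s (n - k) ∣ s n - s k)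
    (a b n : ℕ) (hab : a % n = b % n) : s n ∣ s a - s b :=
  GNS_congruence_general s h0 hdvd a b n hab
end

section
/- Let s be a generalized n-series over a commutative ring R. For all a, b ∈ ℕ, the ideal of R generated by s(gcd(a,b)) equals the ideal generated by s(a) and s(b). -/
/-!
The divisibility `s (n - k) ∣ s n - s k` says that `s (x + y) ≡ s y` modulo `s x`, so
`(s x, s (x + y))` and `(s x, s y)` generate the same ideal. Hence the ideal `(s a, s b)`
is invariant under the steps of the Euclidean algorithm on `(a, b)`, which ends at
`(s 0, s (gcd a b)) = (s (gcd a b))` because `s 0 = 0`.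
-/

namespace GeneralizedNSeries

variable {R : Type*} [CommRing R] {s : ℕ → R}

theorem span_pair_add (h0 : s 0 = 0)
    (hdvd : ∀ n k : ℕ, 0 < k → k < n → s (n - k) ∣ s n - s k) (x y : ℕ) :
    Ideal.span {s x, s (x + y)} = Ideal.span {s x, s y} := by
  rcases Nat.eq_zero_or_pos y with rfl | hy
  · rw [add_zero, h0, Ideal.span_pair_zero, Set.pair_eq_singleton]
  rcases Nat.eq_zero_or_pos x with rfl | hx
  · rw [zero_add]
  obtain ⟨c, hc⟩ : s x ∣ s (x + y) - s y := by
    simpa using hdvd (x + y) y hy (by omega)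
  rw [sub_eq_iff_eq_add'.mp hc, Ideal.span_pair_add_left_mul]

theorem span_pair_add_mul (h0 : s 0 = 0)
    (hdvd : ∀ n k : ℕ, 0 < k → k < n → s (n - k) ∣ s n - s k) (m k q : ℕ) :
    Ideal.span {s m, s (k + m * q)} = Ideal.span {s m, s k} := by
  induction q with
  | zero => rw [mul_zero, add_zero]
  | succ q ih =>
    rw [show k + m * (q + 1) = m + (k + m * q) by ring, span_pair_add h0 hdvd, ih]

end GeneralizedNSeries

theorem GNS_gcd_general {R : Type*} [CommRing R] (s : ℕ → R)
    (h0 : s 0 = 0)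
    (hdvd : ∀ n k : ℕ, 0 < k → k < n → s (n - k) ∣ s n - s k)
    (a b : ℕ) :
    Ideal.span {s (Nat.gcd a b)} = Ideal.span {s a, s b} := by
  induction a, b using Nat.gcd.induction with
  | H0 b => rw [Nat.gcd_zero_left, Ideal.span_pair_comm, h0, Ideal.span_pair_zero]
  | H1 m n _ ih =>
    rw [Nat.gcd_rec, ih, Ideal.span_pair_comm]
    conv_rhs => rw [← Nat.mod_add_div n m]
    rw [GeneralizedNSeries.span_pair_add_mul h0 hdvd]

/-- For a generalized n-series `s`, the ideal generated by `s (gcd a b)` equals the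
ideal generated by `s a` and `s b`. -/
theorem GNS_gcd {R : Type*} [CommRing R] (s : ℕ → R)
    (h0 : s 0 = 0)
    (hreg : ∀ n : ℕ, 0 < n → s n ∈ nonZeroDivisors R)
    (hdvd : ∀ n k : ℕ, 0 < k → k < n → s (n - k) ∣ s n - s k)
    (a b : ℕ) :
    Ideal.span {s (Nat.gcd a b)} = Ideal.span {s a, s b} :=
  GNS_gcd_general s h0 hdvd a b
end

section
/- Let s be a generalized n-series over a commutative ring R such that s(1) is a unit in R. If a, n ∈ ℕ and a is a unit modulo n (i.e., gcd(a,n) = 1), then s(a) is a unit in the quotient ring R/(s(n)). -/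
/-!
The divisibility axiom makes `s` respect congruences: `a ≡ b [MOD n]` implies
`s n ∣ s a - s b`, and in particular `k ∣ m` implies `s k ∣ s m`. If `a * u ≡ 1 [MOD n]`,
then modulo `s n` the element `s a` divides `s (a * u) ≡ s 1`, which is a unit.
-/

namespace GNSeries

variable {R : Type*} [CommRing R] {s : ℕ → R}

theorem dvd_sub_add (h0 : s 0 = 0)
    (hdvd : ∀ n k : ℕ, 0 < k → k < n → s (n - k) ∣ s n - s k) (m k : ℕ) :
    s k ∣ s (m + k) - s m := by
  rcases Nat.eq_zero_or_pos m with rfl | hm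
  · simp [h0]
  rcases Nat.eq_zero_or_pos k with rfl | hk
  · simp
  simpa using hdvd (m + k) m hm (by omega)

theorem dvd_sub_add_mul (h0 : s 0 = 0)
    (hdvd : ∀ n k : ℕ, 0 < k → k < n → s (n - k) ∣ s n - s k) (m v k : ℕ) :
    s k ∣ s (m + v * k) - s m := by
  induction v with
  | zero => simp
  | succ v ih =>
    have hstep := dvd_sub_add h0 hdvd (m + v * k) k
    rw [show m + (v + 1) * k = m + v * k + k by ring]
    simpa using dvd_add hstep ih

theorem dvd_of_dvd (h0 : s 0 = 0)
    (hdvd : ∀ n k : ℕ, 0 < k → k < n → s (n - k) ∣ s n - s k) {k m : ℕ} (h : k ∣ m) :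
    s k ∣ s m := by
  obtain ⟨v, rfl⟩ := h
  simpa [h0, mul_comm] using dvd_sub_add_mul h0 hdvd 0 v k

theorem dvd_sub_of_modEq (h0 : s 0 = 0)
    (hdvd : ∀ n k : ℕ, 0 < k → k < n → s (n - k) ∣ s n - s k) {a b n : ℕ}
    (h : a ≡ b [MOD n]) : s n ∣ s a - s b := by
  wlog hba : b ≤ a generalizing a b
  · exact dvd_sub_comm.mp (this h.symm (by omega))
  obtain ⟨v, hv⟩ := (Nat.modEq_iff_dvd' hba).mp h.symm
  rw [show a = b + v * n by rw [mul_comm, ← hv]; omega]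
  exact dvd_sub_add_mul h0 hdvd b v n

end GNSeries

theorem GNS_unit_mod_general {R : Type*} [CommRing R] (s : ℕ → R)
    (h0 : s 0 = 0)
    (hdvd : ∀ n k : ℕ, 0 < k → k < n → s (n - k) ∣ s n - s k)
    (h1 : IsUnit (s 1))
    (a n : ℕ) (ha : Nat.gcd a n = 1) :
    IsUnit (Ideal.Quotient.mk (Ideal.span {s n}) (s a)) := by
  rcases eq_or_ne n 0 with rfl | hn
  · rw [Nat.gcd_zero_right] at ha
    subst ha
    exact h1.map _
  obtain ⟨u, -, hu⟩ := Nat.exists_mul_mod_eq_of_coprime 1 ha hn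
  have hau : Ideal.Quotient.mk (Ideal.span {s n}) (s (a * u)) =
      Ideal.Quotient.mk (Ideal.span {s n}) (s 1) := by
    rw [Ideal.Quotient.eq, Ideal.mem_span_singleton]
    exact GNSeries.dvd_sub_of_modEq h0 hdvd hu
  refine isUnit_of_dvd_unit ?_ (h1.map (Ideal.Quotient.mk (Ideal.span {s n})))
  rw [← hau]
  exact map_dvd _ (GNSeries.dvd_of_dvd h0 hdvd (dvd_mul_right a u))

/-- For a generalized n-series `s` with `s 1` a unit, if `a` is a unit mod `n`
then `s a` is a unit in `R/(s n)`. -/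
theorem GNS_unit_mod {R : Type*} [CommRing R] (s : ℕ → R)
    (h0 : s 0 = 0)
    (hreg : ∀ n : ℕ, 0 < n → s n ∈ nonZeroDivisors R)
    (hdvd : ∀ n k : ℕ, 0 < k → k < n → s (n - k) ∣ s n - s k)
    (h1 : IsUnit (s 1))
    (a n : ℕ) (ha : Nat.gcd a n = 1) :
    IsUnit (Ideal.Quotient.mk (Ideal.span {s n}) (s a)) :=
  GNS_unit_mod_general s h0 hdvd h1 a n ha
end

section
/- Let s be a generalized n-series over R, and suppose C_s(a,b) = (s(a+b) - s(a) - s(b))/(s(a)s(b)) is defined in R for all a, b > 0 (i.e., s(a)s(b) ∣ s(a+b) - s(a) - s(b)). Then for all integers m > 0 and n > k ≥ 0, c_s(mn, mk) := (s(mn) - s(mk))/s(mn - mk) satisfies c_s(mn, mk) ≡ 1 (mod s(m)). -/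
/-!
Put `a = m(n - k)` and `b = mk`, so that `a + b = mn`. Divisibility of
`s(a + b) - s a - s b` by `s a * s b` gives `s a * c = s a * (1 + s b * e)`, and cancelling the
non-zero-divisor `s a` yields `c - 1 = s b * e`. Finally `s m ∣ s (m * k)`, by induction on `k`
using the same divisibility with `a = m * k`, `b = m`.
-/

namespace GNS

variable {R : Type*} [CommRing R] {s : ℕ → R}

theorem mul_dvd_add_sub_sub (h0 : s 0 = 0)
    (hC : ∀ a b : ℕ, 0 < a → 0 < b → s a * s b ∣ s (a + b) - s a - s b) (a b : ℕ) :
    s a * s b ∣ s (a + b) - s a - s b := by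
  rcases Nat.eq_zero_or_pos a with rfl | ha
  · simp [h0]
  rcases Nat.eq_zero_or_pos b with rfl | hb
  · simp [h0]
  exact hC a b ha hb

variable (hC : ∀ a b : ℕ, s a * s b ∣ s (a + b) - s a - s b)
include hC

theorem dvd_apply_mul (h0 : s 0 = 0) (m k : ℕ) : s m ∣ s (m * k) := by
  induction k with
  | zero => simp [h0]
  | succ k ih =>
    obtain ⟨e, he⟩ := hC (m * k) m
    have hstep : s (m * (k + 1)) = s (m * k) + s m + s m * (s (m * k) * e) := by
      rw [mul_add_one]
      linear_combination he
    rw [hstep]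
    exact dvd_add (dvd_add ih dvd_rfl) (dvd_mul_right _ _)

theorem dvd_sub_one_of_mul_eq {a b : ℕ} (ha : s a ∈ nonZeroDivisors R) {c : R}
    (hc : s a * c = s (a + b) - s b) : s b ∣ c - 1 := by
  obtain ⟨e, he⟩ := hC a b
  have hc' : s a * c = s a * (1 + s b * e) := by
    rw [hc]
    linear_combination he
  rw [(mul_cancel_left_mem_nonZeroDivisors ha).mp hc', add_sub_cancel_left]
  exact dvd_mul_right _ _

end GNS

open GNS in
theorem GNS_c_one_mod_general {R : Type*} [CommRing R] (s : ℕ → R)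
    (h0 : s 0 = 0)
    (hreg : ∀ n : ℕ, 0 < n → s n ∈ nonZeroDivisors R)
    (hC : ∀ a b : ℕ, 0 < a → 0 < b → s a * s b ∣ s (a + b) - s a - s b)
    (m n k : ℕ) (hm : 0 < m) (hk : k < n) :
    ∀ c : R, s (m * n - m * k) * c = s (m * n) - s (m * k) → s m ∣ c - 1 := by
  intro c hc
  have hC' := mul_dvd_add_sub_sub h0 hC
  have hsub : m * n - m * k = m * (n - k) := (Nat.mul_sub m n k).symm
  have hadd : m * (n - k) + m * k = m * n := by rw [← mul_add, Nat.sub_add_cancel hk.le]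
  rw [hsub, ← hadd] at hc
  have hreg' := hreg (m * (n - k)) (Nat.mul_pos hm (Nat.sub_pos_of_lt hk))
  exact (dvd_apply_mul hC' h0 m k).trans (dvd_sub_one_of_mul_eq hC' hreg' hc)

/-- If `C_s(a,b) = (s(a+b) - s a - s b)/(s a · s b)` is defined in `R` for all
`a, b > 0`, then `c_s(mn, mk) = (s(mn) - s(mk))/s(mn - mk) ≡ 1 (mod s m)`. -/
theorem GNS_c_one_mod {R : Type*} [CommRing R] (s : ℕ → R)
    (h0 : s 0 = 0)
    (hreg : ∀ n : ℕ, 0 < n → s n ∈ nonZeroDivisors R)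
    (hdvd : ∀ n k : ℕ, 0 < k → k < n → s (n - k) ∣ s n - s k)
    (hC : ∀ a b : ℕ, 0 < a → 0 < b → s a * s b ∣ s (a + b) - s a - s b)
    (m n k : ℕ) (hm : 0 < m) (hk : k < n) :
    ∀ c : R, s (m * n - m * k) * c = s (m * n) - s (m * k) → s m ∣ c - 1 :=
  GNS_c_one_mod_general s h0 hreg hC m n k hm hk
end

section
/- Let s be a generalized n-series over R such that s(a)s(b) divides s(a+b) - s(a) - s(b) in R for all a, b > 0. Then for every m > 0 and 0 ≤ k ≤ n, the binomial coefficient of the rescaled series s_m(j) = s(mj) satisfies binom(n,k)_{s_m} ≡ binom(n,k) (mod s(m)), where binom(n,k) is the ordinary binomial coefficient. -/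
/-!
Put `t j = s (m j)` and `[n]! = t 1 ⋯ t n`. The hypothesis holds for `t` as well; with `b = 1` it
gives `t 1 ∣ t a` for all `a > 0`, and then it says `t (a + b) = t a + t b · q` with
`q ≡ 1 (mod t 1)`. Splitting `[a + b]! = [a + b - 1]! · (t a + t b · q)` yields the Pascal-type
recursion `B(a, b) = B(a - 1, b) + q · B(a, b - 1)` for the quotients `B(a, b) = [a + b]! / ([a]! [b]!)`,
so `B(a, b) ≡ (a + b).choose a (mod t 1)` by induction. The quotient in the statement is unique
because `[a]! [b]!` is a non-zero-divisor, and `t 1 = s m`.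
-/

open Finset

section SeqFactorial

variable {R : Type*} [CommRing R] {t : ℕ → R}

def seqFactorial (t : ℕ → R) (n : ℕ) : R := ∏ i ∈ range n, t (i + 1)

@[simp]
theorem seqFactorial_zero : seqFactorial t 0 = 1 := prod_range_zero _

theorem seqFactorial_succ (n : ℕ) : seqFactorial t (n + 1) = seqFactorial t n * t (n + 1) :=
  prod_range_succ _ n

theorem seqFactorial_mem_nonZeroDivisors (ht : ∀ n, 0 < n → t n ∈ nonZeroDivisors R) (n : ℕ) :
    seqFactorial t n ∈ nonZeroDivisors R :=
  prod_mem fun i _ => ht (i + 1) i.succ_pos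

section MulDvd

variable (ht : ∀ a b, 0 < a → 0 < b → t a * t b ∣ t (a + b) - t a - t b)
include ht

theorem apply_one_dvd {n : ℕ} (hn : 0 < n) : t 1 ∣ t n := by
  induction n with
  | zero => cases hn
  | succ n ih =>
    rcases n.eq_zero_or_pos with rfl | hn'
    · rfl
    · obtain ⟨c, hc⟩ := ht n 1 hn' one_pos
      have hsplit : t (n + 1) = t n * t 1 * c + t n + t 1 := by linear_combination hc
      rw [hsplit]
      exact dvd_add (dvd_add ((dvd_mul_left _ _).mul_right c) (ih hn')) dvd_rfl

theorem exists_apply_add_sub_eq_mul {a b : ℕ} (ha : 0 < a) (hb : 0 < b) :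
    ∃ q, t (a + b) - t a = t b * q ∧ t 1 ∣ q - 1 := by
  obtain ⟨c, hc⟩ := ht a b ha hb
  refine ⟨1 + t a * c, by linear_combination hc, ?_⟩
  rw [add_sub_cancel_left]
  exact (apply_one_dvd ht ha).mul_right c

theorem exists_seqFactorial_mul_eq_and_dvd_sub_choose (a b : ℕ) :
    ∃ B, seqFactorial t a * seqFactorial t b * B = seqFactorial t (a + b) ∧
      t 1 ∣ B - ((a + b).choose a : R) := by
  induction a generalizing b with
  | zero => exact ⟨1, by simp, by simp⟩
  | succ a iha =>
    induction b with
    | zero => exact ⟨1, by simp, by simp⟩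
    | succ b ihb =>
      obtain ⟨B₁, hB₁, hd₁⟩ := iha (b + 1)
      obtain ⟨B₂, hB₂, hd₂⟩ := ihb
      obtain ⟨q, hq, hq1⟩ :=
        exists_apply_add_sub_eq_mul ht (by omega : 0 < a + 1) (by omega : 0 < b + 1)
      have hab : a + 1 + (b + 1) = a + (b + 1) + 1 := by omega
      rw [hab] at hq
      have hab' : a + 1 + b = a + (b + 1) := by omega
      rw [hab'] at hB₂ hd₂
      rw [seqFactorial_succ] at hB₁ hB₂
      refine ⟨B₁ + q * B₂, ?_, ?_⟩
      · rw [hab, seqFactorial_succ (a + (b + 1)), seqFactorial_succ a, seqFactorial_succ b]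
        linear_combination t (a + 1) * hB₁ + t (b + 1) * q * hB₂ -
          seqFactorial t (a + (b + 1)) * hq
      · rw [hab, Nat.choose_succ_succ, Nat.cast_add]
        convert dvd_add (dvd_add hd₁ hd₂) (hq1.mul_right B₂) using 1
        ring

end MulDvd

end SeqFactorial

open Finset in
theorem GNS_rescaled_binom_mod_general {R : Type*} [CommRing R] (s : ℕ → R)
    (hreg : ∀ n : ℕ, 0 < n → s n ∈ nonZeroDivisors R)
    (hC : ∀ a b : ℕ, 0 < a → 0 < b → s a * s b ∣ s (a + b) - s a - s b)
    (m n k : ℕ) (hm : 0 < m) (hk : k ≤ n) :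
    ∀ B : R,
      (∏ i ∈ range k, s (m * (i + 1))) * (∏ i ∈ range (n - k), s (m * (i + 1))) * B
          = ∏ i ∈ range n, s (m * (i + 1)) →
      s m ∣ B - (n.choose k : R) := by
  intro B hB
  set t : ℕ → R := fun j => s (m * j)
  have ht : ∀ a b, 0 < a → 0 < b → t a * t b ∣ t (a + b) - t a - t b := fun a b ha hb => by
    simpa only [t, Nat.mul_add] using hC (m * a) (m * b) (by positivity) (by positivity)
  obtain ⟨B', hB', hd⟩ := exists_seqFactorial_mul_eq_and_dvd_sub_choose ht k (n - k)
  rw [Nat.add_sub_cancel' hk] at hB' hd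
  have hreg' : ∀ j, seqFactorial t j ∈ nonZeroDivisors R :=
    seqFactorial_mem_nonZeroDivisors fun j hj => hreg _ (Nat.mul_pos hm hj)
  have hBB' : B = B' :=
    (mul_cancel_left_mem_nonZeroDivisors (mul_mem (hreg' k) (hreg' (n - k)))).mp
      (hB.trans hB'.symm)
  simpa only [hBB', t, mul_one] using hd

open Finset in
/-- Under the hypothesis `s a · s b ∣ s (a+b) - s a - s b`, the binomial coefficients
of the rescaled series `s_m(j) = s (m j)` are congruent to the ordinary binomial
coefficients mod `s m`. -/
theorem GNS_rescaled_binom_mod {R : Type*} [CommRing R] (s : ℕ → R)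
    (h0 : s 0 = 0)
    (hreg : ∀ n : ℕ, 0 < n → s n ∈ nonZeroDivisors R)
    (hdvd : ∀ n k : ℕ, 0 < k → k < n → s (n - k) ∣ s n - s k)
    (hC : ∀ a b : ℕ, 0 < a → 0 < b → s a * s b ∣ s (a + b) - s a - s b)
    (m n k : ℕ) (hm : 0 < m) (hk : k ≤ n) :
    ∀ B : R,
      (∏ i ∈ range k, s (m * (i + 1))) * (∏ i ∈ range (n - k), s (m * (i + 1))) * B
          = ∏ i ∈ range n, s (m * (i + 1)) →
      s m ∣ B - (n.choose k : R) :=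
  GNS_rescaled_binom_mod_general s hreg hC m n k hm hk
end

section
/- Let s be a generalized n-series over R with s(1) = 1 and s(a)s(b) ∣ s(a+b) - s(a) - s(b) for all a, b > 0. Then for any prime p and nonnegative integers n₁, n₀, k₁, k₀ with n₀, k₀ < p, one has binom(n₁p + n₀, k₁p + k₀)_s ≡ binom(n₁, k₁) · binom(n₀, k₀)_s (mod s(p)), where binom(n₁,k₁) is the ordinary binomial coefficient. -/
open Finset in
/-- `b` is the s-binomial coefficient `binom(n,k)_s` (with the convention that it is
`0` when `k > n`): `k!_s (n-k)!_s · b = n!_s`. -/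
def IsSBinom {R : Type*} [CommRing R] (s : ℕ → R) (n k : ℕ) (b : R) : Prop :=
  if k ≤ n then
    (∏ i ∈ range k, s (i + 1)) * (∏ i ∈ range (n - k), s (i + 1)) * b
      = ∏ i ∈ range n, s (i + 1)
  else b = 0

/-!
Reduce modulo `s p` through a ring map `φ` killing `s p`. The divisibility
`s a * s b ∣ s (a + b) - s a - s b` makes `s` additive modulo `s a` as soon as `φ (s a) = 0`;
hence `φ (s a) = φ (s (a % p))`, and `φ (s r)` is a unit for `0 < r < p`: if `j r ≡ 1 [MOD p]`
then `s r ∣ s (j r)` and `φ (s (j r)) = φ (s 1) = 1`.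

Induct on `n`. The absorption identity `s (k+1) binom(n+1, k+1) = s (n+1) binom(n, k)` gives the
step when `p ∤ k + 1`, after cancelling the unit `φ (s ((k+1) % p))`. When `p ∣ k + 1` but
`p ∤ n + 1`, the symmetry `k ↦ n - k` brings us back to that case. When `p` divides both, the
Pascal coefficient `c` with `s (n+1) - s (k+1) = s (n-k) c` satisfies `s (k+1) ∣ c - 1`, so the
s-Pascal recursion reduces to the ordinary one `C(N, K) = C(N-1, K-1) + C(N-1, K)`.
-/

open Finset nonZeroDivisors

theorem Nat.add_one_mod_of_not_dvd {a p : ℕ} (h : ¬ p ∣ a + 1) : (a + 1) % p = a % p + 1 := by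
  have := Nat.div_add_mod a p
  have := Nat.div_add_mod (a + 1) p
  rw [Nat.succ_div_of_not_dvd h] at *
  omega

section SBinomial

variable {R : Type*} [CommRing R] {s : ℕ → R}

def sFactorial (s : ℕ → R) (n : ℕ) : R := ∏ i ∈ range n, s (i + 1)

theorem sFactorial_succ (s : ℕ → R) (n : ℕ) : sFactorial s (n + 1) = sFactorial s n * s (n + 1) :=
  prod_range_succ _ _

theorem sFactorial_mem_nonZeroDivisors (hreg : ∀ n, 0 < n → s n ∈ R⁰) (n : ℕ) :
    sFactorial s n ∈ R⁰ :=
  prod_mem fun i _ ↦ hreg (i + 1) i.succ_pos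

theorem isSBinom_iff_of_le {n k : ℕ} {b : R} (h : k ≤ n) :
    IsSBinom s n k b ↔ sFactorial s k * sFactorial s (n - k) * b = sFactorial s n := by
  rw [IsSBinom, if_pos h]; rfl

theorem isSBinom_iff_of_lt {n k : ℕ} {b : R} (h : n < k) : IsSBinom s n k b ↔ b = 0 := by
  rw [IsSBinom, if_neg h.not_ge]

theorem isSBinom_zero_right (s : ℕ → R) (n : ℕ) : IsSBinom s n 0 1 := by
  simp [isSBinom_iff_of_le n.zero_le, sFactorial]

theorem isSBinom_self (s : ℕ → R) (n : ℕ) : IsSBinom s n n 1 := by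
  simp [isSBinom_iff_of_le le_rfl, sFactorial]

namespace IsSBinom

variable {n k : ℕ} {b b' : R}

theorem unique (hreg : ∀ n, 0 < n → s n ∈ R⁰) (h : IsSBinom s n k b) (h' : IsSBinom s n k b') :
    b = b' := by
  rcases le_or_gt k n with hkn | hnk
  · rw [isSBinom_iff_of_le hkn] at h h'
    exact (mul_cancel_left_mem_nonZeroDivisors (mul_mem (sFactorial_mem_nonZeroDivisors hreg k)
      (sFactorial_mem_nonZeroDivisors hreg (n - k)))).mp (h.trans h'.symm)
  · rw [isSBinom_iff_of_lt hnk] at h h'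
    rw [h, h']

theorem symm (h : IsSBinom s n k b) (hkn : k ≤ n) : IsSBinom s n (n - k) b := by
  rw [isSBinom_iff_of_le hkn] at h
  rwa [isSBinom_iff_of_le (n.sub_le k), Nat.sub_sub_self hkn, mul_comm (sFactorial s _)]

theorem succ_succ {B₁ B₂ c : R} (hkn : k < n) (hc : s (n + 1) - s (k + 1) = s (n - k) * c)
    (h₁ : IsSBinom s n k B₁) (h₂ : IsSBinom s n (k + 1) B₂) :
    IsSBinom s (n + 1) (k + 1) (B₁ + c * B₂) := by
  obtain ⟨m, rfl⟩ : ∃ m, n = k + 1 + m := ⟨n - (k + 1), by omega⟩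
  rw [isSBinom_iff_of_le (by omega)] at h₁ h₂ ⊢
  rw [show k + 1 + m - k = m + 1 by omega] at h₁ hc
  rw [show k + 1 + m + 1 - (k + 1) = m + 1 by omega]
  rw [show k + 1 + m - (k + 1) = m by omega] at h₂
  simp only [sFactorial_succ] at h₁ h₂ ⊢
  linear_combination s (k + 1) * h₁ + c * s (m + 1) * h₂ - sFactorial s (k + 1 + m) * hc

theorem absorb (hreg : ∀ n, 0 < n → s n ∈ R⁰) {B : R} (h : IsSBinom s (n + 1) (k + 1) B)
    (h' : IsSBinom s n k b) : s (k + 1) * B = s (n + 1) * b := by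
  rcases le_or_gt k n with hkn | hnk
  · rw [isSBinom_iff_of_le (by omega)] at h
    rw [isSBinom_iff_of_le hkn] at h'
    rw [Nat.add_sub_add_right, sFactorial_succ, sFactorial_succ] at h
    refine (mul_cancel_left_mem_nonZeroDivisors (mul_mem (sFactorial_mem_nonZeroDivisors hreg k)
      (sFactorial_mem_nonZeroDivisors hreg (n - k)))).mp ?_
    linear_combination h - s (n + 1) * h'
  · rw [(isSBinom_iff_of_lt (by omega)).mp h, (isSBinom_iff_of_lt hnk).mp h', mul_zero, mul_zero]

end IsSBinom

theorem exists_isSBinom (hdvd : ∀ n k : ℕ, 0 < k → k < n → s (n - k) ∣ s n - s k) :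
    ∀ n k : ℕ, ∃ b, IsSBinom s n k b
  | _, 0 => ⟨1, isSBinom_zero_right s _⟩
  | 0, k + 1 => ⟨0, (isSBinom_iff_of_lt k.succ_pos).mpr rfl⟩
  | n + 1, k + 1 => by
    rcases lt_trichotomy k n with hkn | rfl | hnk
    · obtain ⟨c, hc⟩ := hdvd (n + 1) (k + 1) k.succ_pos (by omega)
      rw [Nat.add_sub_add_right] at hc
      obtain ⟨B₁, h₁⟩ := exists_isSBinom hdvd n k
      obtain ⟨B₂, h₂⟩ := exists_isSBinom hdvd n (k + 1)
      exact ⟨_, h₁.succ_succ hkn hc h₂⟩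
    · exact ⟨1, isSBinom_self s _⟩
    · exact ⟨0, (isSBinom_iff_of_lt (by omega)).mpr rfl⟩

-- Junk when no such `b` exists; for a generalized n-series it exists and is unique.
noncomputable def sBinom (s : ℕ → R) (n k : ℕ) : R := Classical.epsilon (IsSBinom s n k)

theorem isSBinom_sBinom (hdvd : ∀ n k : ℕ, 0 < k → k < n → s (n - k) ∣ s n - s k) (n k : ℕ) :
    IsSBinom s n k (sBinom s n k) :=
  Classical.epsilon_spec (exists_isSBinom hdvd n k)

theorem IsSBinom.sBinom_eq (hreg : ∀ n, 0 < n → s n ∈ R⁰) {n k : ℕ} {b : R}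
    (h : IsSBinom s n k b) : sBinom s n k = b :=
  (Classical.epsilon_spec ⟨b, h⟩).unique hreg h

theorem sBinom_zero_right (hreg : ∀ n, 0 < n → s n ∈ R⁰) (n : ℕ) : sBinom s n 0 = 1 :=
  (isSBinom_zero_right s n).sBinom_eq hreg

theorem sBinom_self (hreg : ∀ n, 0 < n → s n ∈ R⁰) (n : ℕ) : sBinom s n n = 1 :=
  (isSBinom_self s n).sBinom_eq hreg

theorem sBinom_of_lt (hreg : ∀ n, 0 < n → s n ∈ R⁰) {n k : ℕ} (h : n < k) : sBinom s n k = 0 :=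
  ((isSBinom_iff_of_lt h).mpr rfl).sBinom_eq hreg

theorem sBinom_sub (hreg : ∀ n, 0 < n → s n ∈ R⁰)
    (hdvd : ∀ n k : ℕ, 0 < k → k < n → s (n - k) ∣ s n - s k) {n k : ℕ} (hkn : k ≤ n) :
    sBinom s n (n - k) = sBinom s n k :=
  ((isSBinom_sBinom hdvd n k).symm hkn).sBinom_eq hreg

theorem sBinom_succ_succ (hreg : ∀ n, 0 < n → s n ∈ R⁰)
    (hdvd : ∀ n k : ℕ, 0 < k → k < n → s (n - k) ∣ s n - s k) {n k : ℕ} {c : R} (hkn : k < n)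
    (hc : s (n + 1) - s (k + 1) = s (n - k) * c) :
    sBinom s (n + 1) (k + 1) = sBinom s n k + c * sBinom s n (k + 1) :=
  ((isSBinom_sBinom hdvd n k).succ_succ hkn hc (isSBinom_sBinom hdvd n (k + 1))).sBinom_eq hreg

theorem apply_mul_sBinom_succ_succ (hreg : ∀ n, 0 < n → s n ∈ R⁰)
    (hdvd : ∀ n k : ℕ, 0 < k → k < n → s (n - k) ∣ s n - s k) (n k : ℕ) :
    s (k + 1) * sBinom s (n + 1) (k + 1) = s (n + 1) * sBinom s n k :=
  (isSBinom_sBinom hdvd (n + 1) (k + 1)).absorb hreg (isSBinom_sBinom hdvd n k)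

end SBinomial

section Reduction

variable {R S : Type*} [CommRing R] [CommRing S] {s : ℕ → R} (φ : R →+* S) {p : ℕ}

theorem apply_dvd_apply_mul (h0 : s 0 = 0)
    (hC : ∀ a b : ℕ, 0 < a → 0 < b → s a * s b ∣ s (a + b) - s a - s b) (a : ℕ) :
    ∀ j, s a ∣ s (j * a)
  | 0 => by simp [h0]
  | j + 1 => by
    rcases j.eq_zero_or_pos with rfl | hj
    · simp
    rcases a.eq_zero_or_pos with rfl | ha
    · simp
    have hsum := (dvd_mul_left (s a) (s (j * a))).trans (hC (j * a) a (by positivity) ha)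
    rw [← Nat.succ_mul] at hsum
    simpa [sub_sub] using dvd_add hsum (dvd_add (apply_dvd_apply_mul h0 hC a j) (dvd_refl (s a)))

theorem map_apply_add_of_map_apply_eq_zero (h0 : s 0 = 0)
    (hC : ∀ a b : ℕ, 0 < a → 0 < b → s a * s b ∣ s (a + b) - s a - s b) {a : ℕ}
    (ha : φ (s a) = 0) (b : ℕ) : φ (s (a + b)) = φ (s b) := by
  rcases a.eq_zero_or_pos with rfl | ha₀
  · rw [zero_add]
  rcases b.eq_zero_or_pos with rfl | hb₀
  · rw [add_zero, ha, h0, map_zero]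
  obtain ⟨v, hv⟩ := hC a b ha₀ hb₀
  have := congr_arg φ hv
  simp only [map_sub, map_mul, ha, zero_mul] at this
  linear_combination this

theorem map_apply_mod (h0 : s 0 = 0)
    (hC : ∀ a b : ℕ, 0 < a → 0 < b → s a * s b ∣ s (a + b) - s a - s b) (hφ : φ (s p) = 0)
    (a : ℕ) : φ (s a) = φ (s (a % p)) := by
  obtain ⟨t, ht⟩ := apply_dvd_apply_mul h0 hC p (a / p)
  conv_lhs => rw [← Nat.div_add_mod' a p]
  exact map_apply_add_of_map_apply_eq_zero φ h0 hC (by rw [ht, map_mul, hφ, zero_mul]) _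

theorem isUnit_map_apply (h0 : s 0 = 0) (h1 : s 1 = 1)
    (hC : ∀ a b : ℕ, 0 < a → 0 < b → s a * s b ∣ s (a + b) - s a - s b) (hp : p.Prime)
    (hφ : φ (s p) = 0) {r : ℕ} (hr₀ : 0 < r) (hrp : r < p) : IsUnit (φ (s r)) := by
  obtain ⟨j, -, hj⟩ := Nat.exists_mul_mod_eq_one_of_coprime
    (Nat.coprime_of_lt_prime hr₀.ne' hrp hp).symm hp.one_lt
  obtain ⟨t, ht⟩ := apply_dvd_apply_mul h0 hC r j
  refine IsUnit.of_mul_eq_one (φ t) ?_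
  rw [← map_mul, ← ht, mul_comm, map_apply_mod φ h0 hC hφ, hj, h1, map_one]

theorem apply_dvd_sub_one (hreg : ∀ n, 0 < n → s n ∈ R⁰)
    (hC : ∀ a b : ℕ, 0 < a → 0 < b → s a * s b ∣ s (a + b) - s a - s b) {k m : ℕ} {c : R}
    (hk : 0 < k) (hm : 0 < m) (hc : s (k + m) - s k = s m * c) : s k ∣ c - 1 := by
  obtain ⟨v, hv⟩ := hC k m hk hm
  refine ⟨v, (mul_cancel_left_mem_nonZeroDivisors (hreg m hm)).mp ?_⟩
  linear_combination hv - hc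

end Reduction

section Lucas

variable {R S : Type*} [CommRing R] [CommRing S] {s : ℕ → R} {φ : R →+* S} {p : ℕ}

def LucasCongruence (s : ℕ → R) (φ : R →+* S) (p n k : ℕ) : Prop :=
  φ (sBinom s n k) = ((n / p).choose (k / p) : S) * φ (sBinom s (n % p) (k % p))

theorem lucasCongruence_zero_right (hreg : ∀ n, 0 < n → s n ∈ R⁰) (n : ℕ) :
    LucasCongruence s φ p n 0 := by
  simp [LucasCongruence, sBinom_zero_right hreg]

theorem lucasCongruence_self (hreg : ∀ n, 0 < n → s n ∈ R⁰) (n : ℕ) :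
    LucasCongruence s φ p n n := by
  simp [LucasCongruence, sBinom_self hreg]

theorem lucasCongruence_of_lt (hreg : ∀ n, 0 < n → s n ∈ R⁰) {n k : ℕ} (hnk : n < k) :
    LucasCongruence s φ p n k := by
  rw [LucasCongruence, sBinom_of_lt hreg hnk, map_zero]
  rcases (Nat.div_le_div_right (c := p) hnk.le).eq_or_lt with hdiv | hdiv
  · have hmod : n % p < k % p := by
      have := Nat.div_add_mod n p
      have := Nat.div_add_mod k p
      rw [hdiv] at *
      omega
    rw [sBinom_of_lt hreg hmod, map_zero, mul_zero]
  · rw [Nat.choose_eq_zero_of_lt hdiv, Nat.cast_zero, zero_mul]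

theorem lucasCongruence_succ_succ_of_not_dvd (hreg : ∀ n, 0 < n → s n ∈ R⁰)
    (hdvd : ∀ n k : ℕ, 0 < k → k < n → s (n - k) ∣ s n - s k) (h0 : s 0 = 0) (h1 : s 1 = 1)
    (hC : ∀ a b : ℕ, 0 < a → 0 < b → s a * s b ∣ s (a + b) - s a - s b) (hp : p.Prime)
    (hφ : φ (s p) = 0) {n k : ℕ} (hk : ¬ p ∣ k + 1) (ih : LucasCongruence s φ p n k) :
    LucasCongruence s φ p (n + 1) (k + 1) := by
  have hkdiv : (k + 1) / p = k / p := Nat.succ_div_of_not_dvd hk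
  have hkmod : (k + 1) % p = k % p + 1 := Nat.add_one_mod_of_not_dvd hk
  have habsorb := congr_arg φ (apply_mul_sBinom_succ_succ hreg hdvd n k)
  rw [map_mul, map_mul, map_apply_mod φ h0 hC hφ (k + 1), map_apply_mod φ h0 hC hφ (n + 1),
    hkmod] at habsorb
  rw [LucasCongruence] at ih ⊢
  rw [hkdiv, hkmod]
  have hunit : IsUnit (φ (s (k % p + 1))) :=
    isUnit_map_apply φ h0 h1 hC hp hφ (Nat.succ_pos _) (hkmod ▸ Nat.mod_lt _ hp.pos)
  refine hunit.mul_left_cancel ?_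
  by_cases hn : p ∣ n + 1
  · rw [Nat.mod_eq_zero_of_dvd hn, h0, map_zero, zero_mul] at habsorb
    rw [Nat.mod_eq_zero_of_dvd hn, sBinom_of_lt hreg (Nat.succ_pos _), habsorb, map_zero,
      mul_zero, mul_zero]
  · have hndiv : (n + 1) / p = n / p := Nat.succ_div_of_not_dvd hn
    have hnmod : (n + 1) % p = n % p + 1 := Nat.add_one_mod_of_not_dvd hn
    have habsorb_mod := congr_arg φ (apply_mul_sBinom_succ_succ hreg hdvd (n % p) (k % p))
    rw [map_mul, map_mul] at habsorb_mod
    rw [hndiv, hnmod]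
    rw [hnmod] at habsorb
    linear_combination habsorb + φ (s (n % p + 1)) * ih
      - ((n / p).choose (k / p) : S) * habsorb_mod

theorem lucasCongruence_of_dvd (hreg : ∀ n, 0 < n → s n ∈ R⁰)
    (hdvd : ∀ n k : ℕ, 0 < k → k < n → s (n - k) ∣ s n - s k) (hp : 0 < p) {n k : ℕ}
    (hk : p ∣ k) (hkn : k ≤ n) (h : LucasCongruence s φ p n (n - k)) :
    LucasCongruence s φ p n k := by
  obtain ⟨j, rfl⟩ := hk
  have hj : j ≤ n / p := (Nat.le_div_iff_mul_le hp).mpr (by rwa [mul_comm])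
  rw [LucasCongruence, Nat.sub_mul_div, Nat.sub_mul_mod hkn, sBinom_sub hreg hdvd hkn,
    sBinom_self hreg, Nat.choose_symm hj] at h
  rw [LucasCongruence, Nat.mul_div_cancel_left j hp, Nat.mul_mod_right, sBinom_zero_right hreg, h]

theorem lucasCongruence_succ_succ_of_dvd_of_dvd (hreg : ∀ n, 0 < n → s n ∈ R⁰)
    (hdvd : ∀ n k : ℕ, 0 < k → k < n → s (n - k) ∣ s n - s k) (h0 : s 0 = 0)
    (hC : ∀ a b : ℕ, 0 < a → 0 < b → s a * s b ∣ s (a + b) - s a - s b) (hφ : φ (s p) = 0)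
    (hp : 0 < p) {n k : ℕ} (hn : p ∣ n + 1) (hk : p ∣ k + 1) (hkn : k < n)
    (ih₁ : LucasCongruence s φ p n k) (ih₂ : LucasCongruence s φ p n (k + 1)) :
    LucasCongruence s φ p (n + 1) (k + 1) := by
  obtain ⟨c, hc⟩ := hdvd (n + 1) (k + 1) k.succ_pos (by omega)
  rw [Nat.add_sub_add_right] at hc
  have hc₁ : φ c = 1 := by
    obtain ⟨v, hv⟩ := apply_dvd_sub_one hreg hC (k := k + 1) (m := n - k) k.succ_pos
      (by omega) (by rwa [show k + 1 + (n - k) = n + 1 by omega])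
    have hsk : φ (s (k + 1)) = 0 := by
      rw [map_apply_mod φ h0 hC hφ, Nat.mod_eq_zero_of_dvd hk, h0, map_zero]
    have := congr_arg φ hv
    rwa [map_sub, map_one, map_mul, hsk, zero_mul, sub_eq_zero] at this
  have hnmod : n % p = p - 1 := (Nat.mod_eq_sub_iff one_pos hp).mpr hn
  have hkmod : k % p = p - 1 := (Nat.mod_eq_sub_iff one_pos hp).mpr hk
  rw [LucasCongruence, hnmod, hkmod, sBinom_self hreg, map_one, mul_one] at ih₁
  rw [LucasCongruence, hnmod, Nat.mod_eq_zero_of_dvd hk, sBinom_zero_right hreg, map_one,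
    mul_one] at ih₂
  rw [LucasCongruence, Nat.mod_eq_zero_of_dvd hn, Nat.mod_eq_zero_of_dvd hk, sBinom_zero_right hreg,
    map_one, mul_one, sBinom_succ_succ hreg hdvd hkn hc, map_add, map_mul, hc₁, one_mul, ih₁, ih₂,
    Nat.succ_div_of_dvd hn, Nat.succ_div_of_dvd hk, Nat.choose_succ_succ, Nat.cast_add]

theorem lucasCongruence (hreg : ∀ n, 0 < n → s n ∈ R⁰)
    (hdvd : ∀ n k : ℕ, 0 < k → k < n → s (n - k) ∣ s n - s k) (h0 : s 0 = 0) (h1 : s 1 = 1)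
    (hC : ∀ a b : ℕ, 0 < a → 0 < b → s a * s b ∣ s (a + b) - s a - s b) (hp : p.Prime)
    (hφ : φ (s p) = 0) (n k : ℕ) : LucasCongruence s φ p n k := by
  induction n generalizing k with
  | zero =>
    rcases k.eq_zero_or_pos with rfl | hk
    exacts [lucasCongruence_zero_right hreg 0, lucasCongruence_of_lt hreg hk]
  | succ n ih =>
    obtain _ | k := k
    · exact lucasCongruence_zero_right hreg _
    rcases lt_trichotomy k n with hkn | rfl | hnk
    · by_cases hk : p ∣ k + 1
      · by_cases hn : p ∣ n + 1
        · exact lucasCongruence_succ_succ_of_dvd_of_dvd hreg hdvd h0 hC hφ hp.pos hn hk hkn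
            (ih k) (ih (k + 1))
        · obtain ⟨m, hm⟩ : ∃ m, n - k = m + 1 := ⟨n - k - 1, by omega⟩
          have hm_dvd : ¬ p ∣ m + 1 := fun h ↦ hn <| by
            rw [show n + 1 = (k + 1) + (m + 1) by omega]
            exact dvd_add hk h
          refine lucasCongruence_of_dvd hreg hdvd hp.pos hk (by omega) ?_
          rw [Nat.add_sub_add_right, hm]
          exact lucasCongruence_succ_succ_of_not_dvd hreg hdvd h0 h1 hC hp hφ hm_dvd (ih m)
      · exact lucasCongruence_succ_succ_of_not_dvd hreg hdvd h0 h1 hC hp hφ hk (ih k)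
    · exact lucasCongruence_self hreg _
    · exact lucasCongruence_of_lt hreg (by omega)

end Lucas

/-- The s-Lucas theorem. -/
theorem s_lucas {R : Type*} [CommRing R] (s : ℕ → R)
    (h0 : s 0 = 0)
    (hreg : ∀ n : ℕ, 0 < n → s n ∈ nonZeroDivisors R)
    (hdvd : ∀ n k : ℕ, 0 < k → k < n → s (n - k) ∣ s n - s k)
    (h1 : s 1 = 1)
    (hC : ∀ a b : ℕ, 0 < a → 0 < b → s a * s b ∣ s (a + b) - s a - s b)
    (p : ℕ) (hp : p.Prime)
    (n₁ n₀ k₁ k₀ : ℕ) (hn₀ : n₀ < p) (hk₀ : k₀ < p) :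
    ∀ B b : R, IsSBinom s (n₁ * p + n₀) (k₁ * p + k₀) B → IsSBinom s n₀ k₀ b →
      s p ∣ B - (n₁.choose k₁ : R) * b := by
  intro B b hB hb
  let π := Ideal.Quotient.mk (Ideal.span {s p})
  have hπ : π (s p) = 0 := Ideal.Quotient.eq_zero_iff_mem.mpr (Ideal.mem_span_singleton_self _)
  have key := lucasCongruence hreg hdvd h0 h1 hC hp hπ (n₁ * p + n₀) (k₁ * p + k₀)
  have hdiv (a r : ℕ) (hr : r < p) : (a * p + r) / p = a := by
    rw [add_comm, Nat.add_mul_div_right _ _ hp.pos, Nat.div_eq_of_lt hr, zero_add]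
  rw [LucasCongruence, hdiv _ _ hn₀, hdiv _ _ hk₀, Nat.mul_add_mod_self_right,
    Nat.mul_add_mod_self_right, Nat.mod_eq_of_lt hn₀, Nat.mod_eq_of_lt hk₀, hB.sBinom_eq hreg,
    hb.sBinom_eq hreg] at key
  rw [← Ideal.mem_span_singleton, ← Ideal.Quotient.eq, map_mul, map_natCast]
  exact key
end

section
/- Let s be a generalized n-series over ℤ with all values nonnegative. Then for all n > 0, Φ_n(s) := ∏_{d ∣ n} s(d)^{μ(n/d)} is an integer; in fact Φ_n(s) = s(n) / lcm{ s(n/p) : p prime factor of n }. -/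
/-!
Running the Euclidean algorithm on the indices shows that `s` is a strong divisibility sequence:
`gcd (s a) (s b) = |s (gcd a b)|`. Möbius inversion writes `Φ_n(s)` as the alternating product
of `s (n / ∏ T)` over the sets `T` of prime factors of `n`. Adding the primes of `n` one at a
time, the alternating product over the subsets of `S` equals `s m / lcm_{p ∈ S} s (m / p)`: the
inductive step is `gcd · lcm = product` applied to `s (m / q)` and `lcm_{p ∈ S} s (m / p)`, whose
gcd is `lcm_{p ∈ S} s (m / (q p))` because gcd distributes over lcm and `s` preserves gcds.
-/

open Finset ArithmeticFunction

section DivisibilitySequence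

variable {s : ℕ → ℤ} (h0 : s 0 = 0) (hdvd : ∀ n k : ℕ, 0 < k → k < n → s (n - k) ∣ s n - s k)
include h0 hdvd

theorem gcd_apply_add_self (a b : ℕ) : Int.gcd (s a) (s (b + a)) = Int.gcd (s a) (s b) := by
  rcases Nat.eq_zero_or_pos a with rfl | ha
  · rfl
  rcases Nat.eq_zero_or_pos b with rfl | hb
  · rw [zero_add, h0, Int.gcd_self, Int.gcd_zero_right]
  obtain ⟨c, hc⟩ := hdvd (b + a) b hb (by omega)
  rw [Nat.add_sub_cancel_left] at hc
  rw [show s (b + a) = s b + c * s a by linear_combination hc, Int.gcd_add_mul_right_right]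

theorem gcd_apply_add_mul_self (a b q : ℕ) :
    Int.gcd (s a) (s (b + q * a)) = Int.gcd (s a) (s b) := by
  induction q with
  | zero => simp
  | succ q ih => rw [add_one_mul, ← add_assoc, gcd_apply_add_self h0 hdvd, ih]

theorem gcd_apply_eq_natAbs_apply_gcd (a b : ℕ) :
    Int.gcd (s a) (s b) = (s (a.gcd b)).natAbs := by
  induction a, b using Nat.gcd.induction with
  | H0 b => rw [h0, Int.gcd_zero_left, Nat.gcd_zero_left]
  | H1 a b _ ih =>
    rw [Nat.gcd_rec, ← ih, Int.gcd_comm (s (b % a)),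
      ← gcd_apply_add_mul_self h0 hdvd a (b % a) (b / a), Nat.mod_add_div']

theorem apply_dvd_apply_of_dvd {a b : ℕ} (hab : a ∣ b) : s a ∣ s b := by
  rw [← Int.natAbs_dvd_natAbs, ← Nat.gcd_eq_left hab, ← gcd_apply_eq_natAbs_apply_gcd h0 hdvd]
  exact Nat.gcd_dvd_right _ _

end DivisibilitySequence

theorem Nat.gcd_lcm_eq_lcm_gcd (a b c : ℕ) : a.gcd (b.lcm c) = (a.gcd b).lcm (a.gcd c) := by
  rcases eq_or_ne a 0 with rfl | ha
  · simp
  rcases eq_or_ne b 0 with rfl | hb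
  · simp [Nat.lcm_eq_left (Nat.gcd_dvd_left a c)]
  rcases eq_or_ne c 0 with rfl | hc
  · simp [Nat.lcm_eq_right (Nat.gcd_dvd_left a b)]
  have hab := Nat.gcd_ne_zero_left (n := b) ha
  have hac := Nat.gcd_ne_zero_left (n := c) ha
  refine Nat.eq_of_factorization_eq (Nat.gcd_ne_zero_left ha) (Nat.lcm_ne_zero hab hac) fun p => ?_
  simp only [Nat.factorization_gcd ha (Nat.lcm_ne_zero hb hc), Nat.factorization_lcm hb hc,
    Nat.factorization_lcm hab hac, Nat.factorization_gcd ha hb, Nat.factorization_gcd ha hc,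
    Finsupp.inf_apply, Finsupp.sup_apply, inf_sup_left]

theorem Nat.gcd_finset_lcm {ι : Type*} (a : ℕ) (S : Finset ι) (f : ι → ℕ) :
    a.gcd (S.lcm f) = S.lcm fun i => a.gcd (f i) := by
  classical
  induction S using Finset.induction_on with
  | empty => simp
  | insert i S _ ih => rw [lcm_insert, lcm_insert, ← ih]; exact Nat.gcd_lcm_eq_lcm_gcd _ _ _

theorem Int.finset_lcm_eq_natCast_lcm_natAbs {ι : Type*} (S : Finset ι) (f : ι → ℤ) :
    S.lcm f = ((S.lcm fun i => (f i).natAbs : ℕ) : ℤ) := by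
  classical
  induction S using Finset.induction_on with
  | empty => simp
  | insert i S _ ih => rw [lcm_insert, lcm_insert, ih, ← Int.coe_lcm]; rfl

theorem Nat.gcd_div_div_of_prime {m p q : ℕ} (hp : p.Prime) (hq : q.Prime) (hpq : p ≠ q)
    (hpm : p ∣ m) (hqm : q ∣ m) : (m / p).gcd (m / q) = m / (p * q) := by
  have hcop : p.Coprime q := (Nat.coprime_primes hp hq).2 hpq
  obtain ⟨k, rfl⟩ := hcop.mul_dvd_of_dvd_of_dvd hpm hqm
  rw [Nat.div_eq_of_eq_mul_left hp.pos (by ring : p * q * k = q * k * p),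
    Nat.div_eq_of_eq_mul_left hq.pos (by ring : p * q * k = p * k * q),
    Nat.mul_div_cancel_left _ (Nat.mul_pos hp.pos hq.pos), Nat.gcd_mul_right,
    hcop.symm.gcd_eq_one, one_mul]

theorem Nat.div_ne_zero_of_mem_primeFactors {m p : ℕ} (hp : p ∈ m.primeFactors) : m / p ≠ 0 :=
  (Nat.div_ne_zero_iff_of_dvd (Nat.dvd_of_mem_primeFactors hp)).2
    ⟨(Nat.mem_primeFactors.1 hp).2.2, (Nat.prime_of_mem_primeFactors hp).ne_zero⟩

theorem Nat.mem_primeFactors_div_of_ne {m p q : ℕ} (hp : p ∈ m.primeFactors)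
    (hq : q ∈ m.primeFactors) (hpq : p ≠ q) : p ∈ (m / q).primeFactors := by
  obtain ⟨hpp, hpm, -⟩ := Nat.mem_primeFactors.1 hp
  obtain ⟨hqp, hqm, -⟩ := Nat.mem_primeFactors.1 hq
  have hcop := (Nat.coprime_primes hqp hpp).2 hpq.symm
  exact Nat.mem_primeFactors.2 ⟨hpp, Nat.dvd_div_of_mul_dvd (hcop.mul_dvd_of_dvd_of_dvd hqm hpm),
    Nat.div_ne_zero_of_mem_primeFactors hq⟩

theorem moebius_prod_of_subset_primeFactors {n : ℕ} {T : Finset ℕ} (hT : T ⊆ n.primeFactors) :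
    moebius (∏ p ∈ T, p) = (-1) ^ T.card := by
  rw [isMultiplicative_moebius.map_prod_of_subset_primeFactors n T hT,
    prod_congr rfl fun p hp => moebius_apply_prime (Nat.prime_of_mem_primeFactors (hT hp)),
    prod_const]

theorem prod_divisors_zpow_moebius_eq_prod_powerset_primeFactors {G : Type*}
    [DivisionCommMonoid G] (f : ℕ → G) {n : ℕ} (hn : n ≠ 0) :
    ∏ d ∈ n.divisors, f d ^ moebius (n / d) =
      ∏ T ∈ n.primeFactors.powerset, f (n / ∏ p ∈ T, p) ^ (-1 : ℤ) ^ T.card := by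
  calc ∏ d ∈ n.divisors, f d ^ moebius (n / d)
      = ∏ e ∈ n.divisors, f (n / e) ^ moebius e := by
        rw [← Nat.prod_div_divisors]
        exact prod_congr rfl fun d hd => by rw [Nat.div_div_self (Nat.dvd_of_mem_divisors hd) hn]
    _ = ∏ e ∈ n.divisors with Squarefree e, f (n / e) ^ moebius e := by
        refine (prod_filter_of_ne fun e _ he => ?_).symm
        contrapose! he
        rw [moebius_eq_zero_of_not_squarefree he, zpow_zero]
    _ = ∏ T ∈ n.primeFactors.powerset, f (n / T.val.prod) ^ moebius T.val.prod := by
        rw [prod_eq_multiset_prod, Nat.divisors_filter_squarefree hn, Multiset.map_map,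
          Nat.factors_eq]
        rfl
    _ = _ := prod_congr rfl fun T hT => by
        rw [prod_val]
        exact congrArg (f (n / ∏ p ∈ T, p) ^ ·)
          (moebius_prod_of_subset_primeFactors (mem_powerset.1 hT))

section StrongDivisibility

variable {t : ℕ → ℕ}

theorem finset_lcm_apply_div_ne_zero (ht0 : ∀ n, n ≠ 0 → t n ≠ 0) {m : ℕ} {S : Finset ℕ}
    (hS : S ⊆ m.primeFactors) : (S.lcm fun p => t (m / p)) ≠ 0 := fun h =>
  let ⟨_, hp, hp0⟩ := Finset.lcm_eq_zero_iff.1 h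
  ht0 _ (Nat.div_ne_zero_of_mem_primeFactors (hS hp)) hp0

variable (ht : ∀ a b, (t a).gcd (t b) = t (a.gcd b))
include ht

theorem gcd_apply_div_finset_lcm {m q : ℕ} {S : Finset ℕ} (hq : q ∉ S)
    (hS : insert q S ⊆ m.primeFactors) :
    (t (m / q)).gcd (S.lcm fun p => t (m / p)) = S.lcm fun p => t (m / q / p) := by
  rw [Nat.gcd_finset_lcm]
  refine lcm_congr rfl fun p hp => ?_
  have hqm := hS (mem_insert_self q S)
  have hpm := hS (mem_insert_of_mem hp)
  rw [ht, Nat.gcd_div_div_of_prime (Nat.prime_of_mem_primeFactors hqm)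
    (Nat.prime_of_mem_primeFactors hpm) (fun h => hq (h ▸ hp)) (Nat.dvd_of_mem_primeFactors hqm)
    (Nat.dvd_of_mem_primeFactors hpm), Nat.div_div_eq_div_mul]

theorem prod_powerset_zpow_eq_div_finset_lcm (ht0 : ∀ n, n ≠ 0 → t n ≠ 0) {m : ℕ} (hm : m ≠ 0)
    {S : Finset ℕ} (hS : S ⊆ m.primeFactors) :
    ∏ T ∈ S.powerset, (t (m / ∏ p ∈ T, p) : ℚ) ^ (-1 : ℤ) ^ T.card =
      t m / (S.lcm fun p => t (m / p) : ℕ) := by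
  induction S using Finset.induction_on generalizing m with
  | empty => simp
  | insert q S hq ih =>
    have hqm := hS (mem_insert_self q S)
    have hSm := (insert_subset_iff.1 hS).2
    have hmq := Nat.div_ne_zero_of_mem_primeFactors hqm
    have hSmq : S ⊆ (m / q).primeFactors := fun p hp =>
      Nat.mem_primeFactors_div_of_ne (hSm hp) hqm fun h => hq (h ▸ hp)
    have hinsert : ∏ T ∈ S.powerset,
        (t (m / ∏ p ∈ insert q T, p) : ℚ) ^ (-1 : ℤ) ^ (insert q T).card =
        (∏ T ∈ S.powerset, (t (m / q / ∏ p ∈ T, p) : ℚ) ^ (-1 : ℤ) ^ T.card)⁻¹ := by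
      rw [← prod_inv_distrib]
      refine prod_congr rfl fun T hT => ?_
      have hqT : q ∉ T := fun h => hq (mem_powerset.1 hT h)
      rw [prod_insert hqT, card_insert_of_notMem hqT, Nat.div_div_eq_div_mul, pow_succ, zpow_mul,
        zpow_neg_one]
    have hgcd_mul_lcm : t (m / q) * (S.lcm fun p => t (m / p)) =
        (S.lcm fun p => t (m / q / p)) * ((insert q S).lcm fun p => t (m / p)) := by
      rw [lcm_insert, ← gcd_apply_div_finset_lcm ht hq hS]
      exact (Nat.gcd_mul_lcm _ _).symm
    have htmq := ht0 _ hmq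
    have hL := finset_lcm_apply_div_ne_zero ht0 hSm
    have hL' := finset_lcm_apply_div_ne_zero ht0 hSmq
    have hL_insert := finset_lcm_apply_div_ne_zero ht0 hS
    rw [prod_powerset_insert hq, hinsert, ih hm hSm, ih hmq hSmq]
    have hgcd_mul_lcm_ℚ := congrArg (Nat.cast : ℕ → ℚ) hgcd_mul_lcm
    push_cast at hgcd_mul_lcm_ℚ
    field_simp
    linear_combination (-(t m : ℚ)) * hgcd_mul_lcm_ℚ

end StrongDivisibility

open Finset in
/-- For a nonnegative generalized n-series over `ℤ`,
`Φ_n(s) = ∏_{d ∣ n} s(d)^{μ(n/d)}` is an integer, equal to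
`s n / lcm { s (n/p) : p prime factor of n }`. -/
theorem GNS_cyclotomic_integer (s : ℕ → ℤ)
    (h0 : s 0 = 0)
    (hne : ∀ n : ℕ, 0 < n → s n ≠ 0)
    (hdvd : ∀ n k : ℕ, 0 < k → k < n → s (n - k) ∣ s n - s k)
    (hpos : ∀ n : ℕ, 0 ≤ s n)
    (n : ℕ) (hn : 0 < n) :
    ∃ m : ℤ,
      (∏ d ∈ n.divisors, (s d : ℚ) ^ (ArithmeticFunction.moebius (n / d))) = (m : ℚ) ∧
      (m : ℚ) = (s n : ℚ) / ((n.primeFactors.lcm fun p => s (n / p) : ℤ) : ℚ) := by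
  set t : ℕ → ℕ := fun k => (s k).natAbs
  have hst (k : ℕ) : (s k : ℚ) = (t k : ℚ) := by
    rw [← Int.cast_natCast, Int.natAbs_of_nonneg (hpos k)]
  have ht0 (k : ℕ) (hk : k ≠ 0) : t k ≠ 0 := Int.natAbs_ne_zero.2 (hne k (Nat.pos_of_ne_zero hk))
  set L := n.primeFactors.lcm fun p => s (n / p)
  have hL : L = ((n.primeFactors.lcm fun p => t (n / p) : ℕ) : ℤ) :=
    Int.finset_lcm_eq_natCast_lcm_natAbs _ _
  have hL0 : (L : ℚ) ≠ 0 := by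
    rw [hL, Int.cast_natCast, Nat.cast_ne_zero]
    exact finset_lcm_apply_div_ne_zero ht0 subset_rfl
  have hLdvd : L ∣ s n := Finset.lcm_dvd fun p hp =>
    apply_dvd_apply_of_dvd h0 hdvd (Nat.div_dvd_of_dvd (Nat.dvd_of_mem_primeFactors hp))
  refine ⟨s n / L, ?_, Int.cast_div hLdvd hL0⟩
  calc ∏ d ∈ n.divisors, (s d : ℚ) ^ moebius (n / d)
      = ∏ d ∈ n.divisors, (t d : ℚ) ^ moebius (n / d) := prod_congr rfl fun d _ => by rw [hst]
    _ = ∏ T ∈ n.primeFactors.powerset, (t (n / ∏ p ∈ T, p) : ℚ) ^ (-1 : ℤ) ^ T.card :=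
        prod_divisors_zpow_moebius_eq_prod_powerset_primeFactors _ hn.ne'
    _ = t n / (n.primeFactors.lcm fun p => t (n / p) : ℕ) :=
        prod_powerset_zpow_eq_div_finset_lcm (gcd_apply_eq_natAbs_apply_gcd h0 hdvd) ht0 hn.ne'
          subset_rfl
    _ = ((s n / L : ℤ) : ℚ) := by rw [Int.cast_div hLdvd hL0, hst, hL, Int.cast_natCast]
end

section
/- Let s be a nonnegative generalized n-series over ℤ, m > 0, and a, b ≥ 0 with a ≡ b (mod m) and a, b not ≡ 0 (mod m). Set d = gcd(a,m) = gcd(b,m). Then s(a)/s(d) ≡ s(b)/s(d) (mod Φ_m(s)), and both sides are units modulo Φ_m(s). -/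
/-!
Since `s` is a strong divisibility sequence, `s (gcd x y) = gcd (s x) (s y)`, so for each prime
`p` the function `f = v_p ∘ s` turns gcd into min. For such `f` every threshold set
`{e ∣ m | c < f e}` is closed under gcd and under passing to multiples, hence consists of the
multiples of a single divisor `g`, and the Möbius sum `∑ μ (m / e)` over it is `[g = m]`.
Summing over the thresholds `c` gives `v_p Φ_m = v_p (s m) - max_{e ∣ m, e < m} v_p (s e)`,
so `Φ_m s(d) ∣ s(m)` for every proper divisor `d` of `m`.

With `d = gcd(a, m)` the congruence follows from `s m ∣ s a - s b = s d (u - v)`. A common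
divisor `c` of `u` and `Φ_m` gives `c s(d) ∣ s a` and `c s(d) ∣ s m`, hence
`c s(d) ∣ s (gcd a m) = s d`, so `c` is a unit.
-/

open Finset ArithmeticFunction
open scoped ArithmeticFunction.Moebius

structure IsGenNSeries {R : Type*} [CommRing R] (s : ℕ → R) : Prop where
  apply_zero : s 0 = 0
  dvd_sub_apply : ∀ n k : ℕ, 0 < k → k < n → s (n - k) ∣ s n - s k

namespace IsGenNSeries

section CommRing

variable {R : Type*} [CommRing R] {s : ℕ → R} (hs : IsGenNSeries s)
include hs

theorem dvd_sub_apply_mod (k n : ℕ) : s k ∣ s n - s (n % k) := by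
  induction n using Nat.strong_induction_on with
  | _ n ih =>
    rcases lt_trichotomy k n with hkn | rfl | hnk
    · rcases Nat.eq_zero_or_pos k with rfl | hk
      · simp
      have hstep : s k ∣ s n - s (n - k) := by
        simpa [Nat.sub_sub_self hkn.le] using hs.dvd_sub_apply n (n - k) (by omega) (by omega)
      rw [Nat.mod_eq_sub_mod hkn.le]
      simpa using dvd_add hstep (ih (n - k) (by omega))
    · simp [hs.apply_zero]
    · simp [Nat.mod_eq_of_lt hnk]

theorem dvd_apply_of_dvd {d n : ℕ} (h : d ∣ n) : s d ∣ s n := by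
  simpa [Nat.mod_eq_zero_of_dvd h, hs.apply_zero] using hs.dvd_sub_apply_mod d n

theorem dvd_sub_apply_of_modEq {m a b : ℕ} (h : a ≡ b [MOD m]) : s m ∣ s a - s b := by
  have := dvd_sub (hs.dvd_sub_apply_mod m a) (hs.dvd_sub_apply_mod m b)
  rwa [show a % m = b % m from h, sub_sub_sub_cancel_right] at this

theorem dvd_apply_gcd {c : R} {x y : ℕ} (hx : c ∣ s x) (hy : c ∣ s y) :
    c ∣ s (x.gcd y) := by
  induction x, y using Nat.gcd.induction with
  | H0 n => simpa using hy
  | H1 k n _ ih =>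
    rw [Nat.gcd_rec]
    exact ih ((dvd_sub_right hy).mp (hx.trans (hs.dvd_sub_apply_mod k n))) hx

theorem isRelPrime_of_mul_dvd [IsDomain R] {x m : ℕ} {u Φ : R} (hu : s (x.gcd m) * u = s x)
    (hΦ : Φ * s (x.gcd m) ∣ s m) (hsd : s (x.gcd m) ≠ 0) : IsRelPrime u Φ := by
  intro c hcu hcΦ
  have hc : c * s (x.gcd m) ∣ 1 * s (x.gcd m) := by
    rw [one_mul]
    refine hs.dvd_apply_gcd ?_ ((mul_dvd_mul_right hcΦ _).trans hΦ)
    rw [← hu, mul_comm (s _)]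
    exact mul_dvd_mul_right hcu _
  exact isUnit_of_dvd_one ((mul_dvd_mul_iff_right hsd).mp hc)

end CommRing

end IsGenNSeries

theorem Nat.exists_forall_mem_divisors_iff_dvd {m : ℕ} {P : ℕ → Prop} (hm0 : m ≠ 0)
    (hPm : P m)
    (hgcd : ∀ x ∈ m.divisors, ∀ y ∈ m.divisors, P x → P y → P (x.gcd y))
    (hdvd : ∀ x ∈ m.divisors, ∀ y ∈ m.divisors, x ∣ y → P x → P y) :
    ∃ g ∈ m.divisors, ∀ e ∈ m.divisors, P e ↔ g ∣ e := by
  classical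
  have hex : ∃ g, g ∈ m.divisors ∧ P g := ⟨m, Nat.mem_divisors_self m hm0, hPm⟩
  obtain ⟨hg, hPg⟩ := Nat.find_spec hex
  refine ⟨Nat.find hex, hg, fun e he => ⟨fun hPe => ?_, fun h => hdvd _ hg e he h hPg⟩⟩
  have hgcd_mem : (Nat.find hex).gcd e ∈ m.divisors :=
    Nat.mem_divisors.mpr ⟨(Nat.gcd_dvd_left _ _).trans (Nat.dvd_of_mem_divisors hg), hm0⟩
  have hmin := Nat.find_min' hex ⟨hgcd_mem, hgcd _ hg e he hPg hPe⟩
  have hle := Nat.gcd_le_left e (Nat.pos_of_mem_divisors hg)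
  exact Nat.gcd_eq_left_iff_dvd.mp (le_antisymm hle hmin)

theorem Nat.sum_divisors_filter_dvd_moebius {m g : ℕ} (hm : m ≠ 0) (hg : g ∣ m) :
    ∑ e ∈ m.divisors with g ∣ e, (μ (m / e) : ℤ) = if g = m then 1 else 0 := by
  have hflip : ∑ e ∈ m.divisors with g ∣ e, (μ (m / e) : ℤ)
      = ∑ e ∈ m.divisors, if g ∣ m / (m / e) then (μ (m / e) : ℤ) else 0 := by
    rw [sum_filter]
    refine sum_congr rfl fun e he => ?_
    rw [Nat.div_div_self (Nat.dvd_of_mem_divisors he) hm]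
  have hcomp : ∀ k ∈ m.divisors, (g ∣ m / k ↔ k ∣ m / g) := fun k hk => by
    rw [Nat.dvd_div_iff_mul_dvd (Nat.dvd_of_mem_divisors hk), Nat.dvd_div_iff_mul_dvd hg, mul_comm]
  rw [hflip, Nat.sum_div_divisors m (fun k => if g ∣ m / k then (μ k : ℤ) else 0),
    ← sum_filter, filter_congr hcomp, Nat.divisors_filter_dvd_of_dvd hm (Nat.div_dvd_of_dvd hg),
    ← coe_mul_zeta_apply, moebius_mul_coe_zeta, one_apply]
  have hgpos : 0 < g := Nat.pos_of_dvd_of_pos hg (Nat.pos_of_ne_zero hm)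
  simp only [Nat.div_eq_iff_eq_mul_left hgpos hg, one_mul, eq_comm]

section GcdMin

variable {f : ℕ → ℕ} (hf : ∀ x y, 0 < x → 0 < y → f (x.gcd y) = min (f x) (f y))
include hf

theorem le_of_dvd_of_gcd_eq_min {x y : ℕ} (hx : 0 < x) (hy : 0 < y) (h : x ∣ y) :
    f x ≤ f y := by
  have := hf x y hx hy
  rw [Nat.gcd_eq_left h] at this
  omega

theorem sum_divisors_filter_lt_moebius {m c : ℕ} (hm : m ≠ 0) (hc : c < f m) :
    ∑ e ∈ m.divisors with c < f e, (μ (m / e) : ℤ)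
      = if m.properDivisors.sup f ≤ c then 1 else 0 := by
  obtain ⟨g, hg, hgiff⟩ := Nat.exists_forall_mem_divisors_iff_dvd (P := fun e => c < f e) hm hc
    (fun x hx y hy hcx hcy => by
      rw [hf x y (Nat.pos_of_mem_divisors hx) (Nat.pos_of_mem_divisors hy)]
      exact lt_min hcx hcy)
    (fun x hx y hy hxy hcx => hcx.trans_le (le_of_dvd_of_gcd_eq_min hf
      (Nat.pos_of_mem_divisors hx) (Nat.pos_of_mem_divisors hy) hxy))
  rw [filter_congr hgiff, Nat.sum_divisors_filter_dvd_moebius hm (Nat.dvd_of_mem_divisors hg)]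
  congr 1
  apply propext
  constructor
  · rintro rfl
    refine Finset.sup_le fun e he => ?_
    obtain ⟨hem, hlt⟩ := Nat.mem_properDivisors.mp he
    by_contra! hce
    have := Nat.le_of_dvd (Nat.pos_of_mem_properDivisors he)
      ((hgiff e (Nat.mem_divisors.mpr ⟨hem, hm⟩)).mp hce)
    omega
  · intro hsup
    by_contra hgm
    have hgp : g ∈ m.properDivisors := Nat.mem_properDivisors.mpr
      ⟨Nat.dvd_of_mem_divisors hg, (Nat.divisor_le hg).lt_of_ne hgm⟩
    exact lt_irrefl c (((hgiff g hg).mpr dvd_rfl).trans_le ((le_sup hgp).trans hsup))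

theorem sum_divisors_moebius_mul_eq_sub_sup {m : ℕ} (hm : m ≠ 0) :
    ∑ e ∈ m.divisors, (μ (m / e) : ℤ) * f e = f m - m.properDivisors.sup f := by
  have hsup : m.properDivisors.sup f ≤ f m := Finset.sup_le fun e he =>
    le_of_dvd_of_gcd_eq_min hf (Nat.pos_of_mem_properDivisors he) (Nat.pos_of_ne_zero hm)
      (Nat.mem_properDivisors.mp he).1
  have hlayer : ∀ e ∈ m.divisors,
      (f e : ℤ) = ∑ c ∈ range (f m), if c < f e then 1 else 0 := by
    intro e he
    have hle := le_of_dvd_of_gcd_eq_min hf (Nat.pos_of_mem_divisors he) (Nat.pos_of_ne_zero hm)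
      (Nat.dvd_of_mem_divisors he)
    rw [sum_boole, show {c ∈ range (f m) | c < f e} = range (f e) by
      ext; simp only [mem_filter, mem_range]; omega, card_range]
  calc ∑ e ∈ m.divisors, (μ (m / e) : ℤ) * f e
      = ∑ c ∈ range (f m), ∑ e ∈ m.divisors with c < f e, (μ (m / e) : ℤ) := by
        rw [sum_congr rfl fun e he => by rw [hlayer e he, mul_sum], sum_comm]
        simp_rw [sum_filter, mul_boole]
    _ = ∑ c ∈ range (f m), if m.properDivisors.sup f ≤ c then 1 else 0 :=
        sum_congr rfl fun c hc => sum_divisors_filter_lt_moebius hf hm (mem_range.mp hc)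
    _ = f m - m.properDivisors.sup f := by
        rw [sum_boole, show {c ∈ range (f m) | m.properDivisors.sup f ≤ c}
            = Ico (m.properDivisors.sup f) (f m) by
          ext; simp only [mem_filter, mem_range, mem_Ico]; omega, Nat.card_Ico]
        push_cast [hsup]
        ring

end GcdMin

theorem padicValNat_gcd (p : ℕ) [Fact p.Prime] {a b : ℕ} (ha : a ≠ 0) (hb : b ≠ 0) :
    padicValNat p (a.gcd b) = min (padicValNat p a) (padicValNat p b) := by
  simp only [← Nat.factorization_def _ Fact.out, Nat.factorization_gcd ha hb, Finsupp.inf_apply]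

theorem padicValRat_prod {ι : Type*} (p : ℕ) [Fact p.Prime] (t : Finset ι) {q : ι → ℚ}
    (hq : ∀ i ∈ t, q i ≠ 0) :
    padicValRat p (∏ i ∈ t, q i) = ∑ i ∈ t, padicValRat p (q i) := by
  induction t using Finset.cons_induction with
  | empty => simp
  | cons i t hi ih =>
    rw [prod_cons, sum_cons, padicValRat.mul (hq i (mem_cons_self i t))
      (prod_ne_zero_iff.mpr fun j hj => hq j (mem_cons_of_mem hj)),
      ih fun j hj => hq j (mem_cons_of_mem hj)]

theorem Int.dvd_of_forall_padicValInt_le {a b : ℤ} (ha : a ≠ 0) (hb : b ≠ 0)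
    (h : ∀ p : ℕ, p.Prime → padicValInt p a ≤ padicValInt p b) : a ∣ b := by
  rw [← Int.natAbs_dvd_natAbs, ← Nat.factorization_prime_le_iff_dvd (Int.natAbs_ne_zero.mpr ha)
    (Int.natAbs_ne_zero.mpr hb)]
  intro p hp
  rw [Nat.factorization_def _ hp, Nat.factorization_def _ hp]
  exact h p hp

namespace IsGenNSeries

variable {s : ℕ → ℤ} (hs : IsGenNSeries s) (hpos : ∀ n, 0 < n → 0 < s n)
include hs hpos

theorem apply_nonneg (n : ℕ) : 0 ≤ s n := by
  rcases Nat.eq_zero_or_pos n with rfl | hn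
  · exact hs.apply_zero.ge
  · exact (hpos n hn).le

theorem gcd_apply (x y : ℕ) : (Int.gcd (s x) (s y) : ℤ) = s (x.gcd y) :=
  Int.dvd_antisymm (Int.natCast_nonneg _) (hs.apply_nonneg hpos _)
    (hs.dvd_apply_gcd (Int.gcd_dvd_left _ _) (Int.gcd_dvd_right _ _))
    (Int.dvd_coe_gcd (hs.dvd_apply_of_dvd (Nat.gcd_dvd_left x y))
      (hs.dvd_apply_of_dvd (Nat.gcd_dvd_right x y)))

theorem padicValInt_apply_gcd (p : ℕ) [Fact p.Prime] {x y : ℕ} (hx : 0 < x) (hy : 0 < y) :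
    padicValInt p (s (x.gcd y)) = min (padicValInt p (s x)) (padicValInt p (s y)) := by
  rw [← hs.gcd_apply hpos, padicValInt.of_nat, Int.gcd,
    padicValNat_gcd p (Int.natAbs_ne_zero.mpr (hpos x hx).ne')
      (Int.natAbs_ne_zero.mpr (hpos y hy).ne')]
  rfl

variable {m : ℕ} {Φ : ℤ} (hΦ : (Φ : ℚ) = ∏ e ∈ m.divisors, (s e : ℚ) ^ μ (m / e))
include hΦ

theorem padicValInt_eq_sub_sup (hm : m ≠ 0) (p : ℕ) [Fact p.Prime] :
    (padicValInt p Φ : ℤ)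
      = padicValInt p (s m) - m.properDivisors.sup fun e => padicValInt p (s e) := by
  have hne : ∀ e ∈ m.divisors, (s e : ℚ) ≠ 0 := fun e he =>
    Int.cast_ne_zero.mpr (hpos e (Nat.pos_of_mem_divisors he)).ne'
  rw [← sum_divisors_moebius_mul_eq_sub_sup (f := fun e => padicValInt p (s e))
      (fun x y hx hy => hs.padicValInt_apply_gcd hpos p hx hy) hm,
    ← padicValRat.of_int, hΦ, padicValRat_prod p _ fun e he => zpow_ne_zero _ (hne e he)]
  refine sum_congr rfl fun e _ => ?_
  rw [padicValRat.zpow, padicValRat.of_int]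

theorem mul_apply_dvd_of_mem_properDivisors {d : ℕ} (hd : d ∈ m.properDivisors) :
    Φ * s d ∣ s m := by
  have hm : 0 < m := Nat.pos_of_ne_zero fun h => by simp [h] at hd
  have hΦ0 : Φ ≠ 0 := by
    rintro rfl
    refine (prod_ne_zero_iff.mpr fun e he => zpow_ne_zero _ ?_) (hΦ.symm.trans Int.cast_zero)
    exact Int.cast_ne_zero.mpr (hpos e (Nat.pos_of_mem_divisors he)).ne'
  have hsd := (hpos d (Nat.pos_of_mem_properDivisors hd)).ne'
  refine Int.dvd_of_forall_padicValInt_le (mul_ne_zero hΦ0 hsd) (hpos m hm).ne' fun p hp => ?_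
  have := Fact.mk hp
  have hval := hs.padicValInt_eq_sub_sup hpos hΦ hm.ne' p
  have hle := le_sup (f := fun e => padicValInt p (s e)) hd
  rw [padicValInt.mul hΦ0 hsd]
  omega

end IsGenNSeries

open Finset in
/-- For a nonnegative generalized n-series over `ℤ`, if `a ≡ b ≢ 0 (mod m)` and
`d = gcd(a,m) = gcd(b,m)`, then `s a / s d ≡ s b / s d (mod Φ_m(s))`, and both
sides are units modulo `Φ_m(s)`. -/
theorem GNS_phi_congruence (s : ℕ → ℤ)
    (h0 : s 0 = 0)
    (hne : ∀ n : ℕ, 0 < n → 0 < s n)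
    (hdvd : ∀ n k : ℕ, 0 < k → k < n → s (n - k) ∣ s n - s k)
    (m a b : ℕ) (hm : 0 < m) (hab : a % m = b % m) (ha : a % m ≠ 0)
    (d : ℕ) (hd : d = Nat.gcd a m)
    (Φ : ℤ)
    (hΦ : (Φ : ℚ) = ∏ e ∈ m.divisors, (s e : ℚ) ^ (ArithmeticFunction.moebius (m / e)))
    (u v : ℤ) (hu : s d * u = s a) (hv : s d * v = s b) :
    Φ ∣ u - v ∧ IsCoprime u Φ ∧ IsCoprime v Φ := by
  have hs : IsGenNSeries s := ⟨h0, hdvd⟩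
  have hdm : d ∈ m.properDivisors := by
    rw [hd, Nat.mem_properDivisors]
    refine ⟨Nat.gcd_dvd_right a m, (Nat.le_of_dvd hm (Nat.gcd_dvd_right a m)).lt_of_ne ?_⟩
    exact fun h => ha (Nat.mod_eq_zero_of_dvd (h ▸ Nat.gcd_dvd_left a m))
  have hΦd : Φ * s d ∣ s m := hs.mul_apply_dvd_of_mem_properDivisors hne hΦ hdm
  have hsd : s d ≠ 0 := (hne d (Nat.pos_of_mem_properDivisors hdm)).ne'
  have hdb : d = b.gcd m := hd.trans (Nat.ModEq.gcd_eq hab)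
  refine ⟨(mul_dvd_mul_iff_right hsd).mp ?_, ?_, ?_⟩
  · rw [sub_mul, mul_comm u, mul_comm v, hu, hv]
    exact hΦd.trans (hs.dvd_sub_apply_of_modEq hab)
  · subst hd
    exact (hs.isRelPrime_of_mul_dvd hu hΦd hsd).isCoprime
  · subst hdb
    exact (hs.isRelPrime_of_mul_dvd hv hΦd hsd).isCoprime
end

section
/- Let s be a strictly increasing generalized n-series over ℤ that is not a scalar multiple of n ↦ [n]_q for any positive integer q (with the convention [n]_1 = n). Then for every a ≥ 0 there exist constants C > 0 and N such that s(n) ≥ C·aⁿ for all n ≥ N; that is, s(n) = Ω(aⁿ) for every a. -/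
/-!
Dividing by `s 1`, which divides every `s n`, reduces to the case `s 1 = 1`. Then
`s (p + 1) ≡ 1 [ZMOD s p]`, and with `Q = s 2 - 1` the divisibility `s p ∣ s (p + 2) - s 2`
shows that once `s p > Q` every step is either affine, `s (p + 2) = Q * s (p + 1) + 1`, or a
jump, `s (p + 2) ≥ s p * s (p + 1)`. Pick `j` with `s j ≠ [j]_Q`. A run of `j` affine steps
starting at `n` would give `s n ∣ [j]_Q - s j`, impossible once `s n > |[j]_Q - s j|`; so every
window of length `j` eventually contains a jump, whence `s (n + j) ≥ (n - 1) * s n` for large `n`,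
and `s` outgrows every exponential.
-/

section

open Finset

variable {s t : ℕ → ℤ}

theorem natCast_le_of_strictMono (h0 : s 0 = 0) (hmono : StrictMono s) (n : ℕ) :
    (n : ℤ) ≤ s n := by
  induction n with
  | zero => simp [h0]
  | succ n ih => push_cast; linarith [hmono n.lt_succ_self]

theorem apply_one_dvd_s14 (h0 : s 0 = 0)
    (hdvd : ∀ n k : ℕ, 0 < k → k < n → s (n - k) ∣ s n - s k) (n : ℕ) : s 1 ∣ s n := by
  induction n using Nat.strong_induction_on with
  | _ n ih =>
    match n with
    | 0 => simp [h0]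
    | 1 => rfl
    | n + 2 =>
      have h := hdvd (n + 2) (n + 1) n.succ_pos (by omega)
      rw [show n + 2 - (n + 1) = 1 by omega] at h
      simpa using dvd_add h (ih (n + 1) (by omega))

theorem eq_pow_mul_add_geom_sum {R : Type*} [CommRing R] (u : ℕ → R) (Q : R) (n : ℕ) :
    ∀ j : ℕ, (∀ i < j, u (n + i + 1) = Q * u (n + i) + 1) →
      u (n + j) = Q ^ j * u n + ∑ i ∈ range j, Q ^ i
  | 0, _ => by simp
  | j + 1, h => by
    rw [← add_assoc, h j j.lt_succ_self,
      eq_pow_mul_add_geom_sum u Q n j fun i hi => h i (hi.trans j.lt_succ_self),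
      geom_sum_succ, pow_succ]
    ring

theorem dvd_geom_sum_sub_of_affine_run
    (hdvd : ∀ n k : ℕ, 0 < k → k < n → t (n - k) ∣ t n - t k) (Q : ℤ) {n j : ℕ}
    (hn : 0 < n) (hj : 0 < j) (hrun : ∀ i < j, t (n + i + 1) = Q * t (n + i) + 1) :
    t n ∣ ∑ i ∈ range j, Q ^ i - t j := by
  have h := hdvd (n + j) j hj (by omega)
  rw [Nat.add_sub_cancel, eq_pow_mul_add_geom_sum t Q n j hrun] at h
  have e : ∑ i ∈ range j, Q ^ i - t j =
      (Q ^ j * t n + ∑ i ∈ range j, Q ^ i - t j) - t n * Q ^ j := by ring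
  rw [e]
  exact dvd_sub h (dvd_mul_right _ _)

theorem mul_le_of_ne_affine (h0 : t 0 = 0) (h1 : t 1 = 1)
    (hdvd : ∀ n k : ℕ, 0 < k → k < n → t (n - k) ∣ t n - t k) (hmono : StrictMono t)
    {p : ℕ} (hp : 0 < p) (hQ : t 2 - 1 < t p) (hne : t (p + 2) ≠ (t 2 - 1) * t (p + 1) + 1) :
    t p * t (p + 1) ≤ t (p + 2) := by
  have hdvd_succ : ∀ n, 0 < n → t n ∣ t (n + 1) - 1 := fun n hn => by
    simpa [h1] using hdvd (n + 1) 1 one_pos (by omega)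
  obtain ⟨m, hm⟩ : t (p + 1) ∣ t (p + 2) - 1 := hdvd_succ (p + 1) p.succ_pos
  obtain ⟨m', hm'⟩ := hdvd_succ p hp
  have hp_pos : 0 < t p := h0 ▸ hmono hp
  have hm_pos : 0 < m := by
    nlinarith [hmono (show p < p + 1 by omega), hmono (show p + 1 < p + 2 by omega)]
  have hmQ : t p ∣ m - (t 2 - 1) := by
    have h := hdvd (p + 2) 2 two_pos (by omega)
    rw [Nat.add_sub_cancel] at h
    have e : m - (t 2 - 1) = (t (p + 2) - t 2) - t p * (m' * m) := by
      linear_combination (-1 : ℤ) * hm - m * hm'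
    rw [e]
    exact dvd_sub h (dvd_mul_right _ _)
  have hm_ne : m - (t 2 - 1) ≠ 0 := fun h => hne (by linear_combination hm + t (p + 1) * h)
  have hle : t p ≤ |m - (t 2 - 1)| :=
    Int.le_of_dvd (abs_pos.mpr hm_ne) ((dvd_abs _ _).mpr hmQ)
  have hQ_nonneg : 0 ≤ t 2 - 1 := by linarith [hmono one_lt_two]
  have hm_ge : t p ≤ m := by
    rcases le_abs'.mp hle with h | h <;> omega
  nlinarith [hmono p.lt_succ_self]

theorem sub_one_mul_le_apply_add (h0 : t 0 = 0) (h1 : t 1 = 1)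
    (hdvd : ∀ n k : ℕ, 0 < k → k < n → t (n - k) ∣ t n - t k) (hmono : StrictMono t)
    {j : ℕ} (hj : 0 < j) (hgeom : t j ≠ ∑ i ∈ range j, (t 2 - 1) ^ i) {n : ℕ}
    (hn_geom : |∑ i ∈ range j, (t 2 - 1) ^ i - t j| < n) (hn_two : t 2 + 1 ≤ n) :
    ((n : ℤ) - 1) * t n ≤ t (n + j) := by
  have hle := natCast_le_of_strictMono h0 hmono
  have hn : 2 < n := by have := hle 2; push_cast at this; omega
  by_cases hrun : ∀ i < j, t (n + i + 1) = (t 2 - 1) * t (n + i) + 1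
  · have h := dvd_geom_sum_sub_of_affine_run hdvd (t 2 - 1) (by omega) hj hrun
    have := Int.le_of_dvd (abs_pos.mpr (sub_ne_zero.mpr hgeom.symm)) ((dvd_abs _ _).mpr h)
    linarith [hle n]
  · push Not at hrun
    obtain ⟨i, hi, hne⟩ := hrun
    obtain ⟨p, hp⟩ : ∃ p, n + i = p + 1 := ⟨n + i - 1, by omega⟩
    rw [hp, add_assoc] at hne
    have hjump := mul_le_of_ne_affine h0 h1 hdvd hmono (p := p) (by omega)
      (by linarith [hle p, show (n : ℤ) ≤ p + 1 by omega]) hne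
    calc ((n : ℤ) - 1) * t n ≤ t p * t (p + 1) :=
          mul_le_mul (by linarith [hle p, show (n : ℤ) ≤ p + 1 by omega])
            (hmono.monotone (by omega)) (by linarith [hle n]) (by linarith [hle p])
      _ ≤ t (p + 2) := hjump
      _ ≤ t (n + j) := hmono.monotone (by omega)

theorem exists_sub_one_mul_le_apply_add_of_apply_one (h0 : t 0 = 0) (h1 : t 1 = 1)
    (hdvd : ∀ n k : ℕ, 0 < k → k < n → t (n - k) ∣ t n - t k) (hmono : StrictMono t)
    (hnot : ¬ ∃ q : ℕ, 0 < q ∧ ∀ n : ℕ, t n = ∑ i ∈ range n, (q : ℤ) ^ i) :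
    ∃ j > 0, ∃ N : ℕ, ∀ n ≥ N, ((n : ℤ) - 1) * t n ≤ t (n + j) := by
  have hQ : 1 ≤ t 2 - 1 := by linarith [hmono one_lt_two]
  obtain ⟨j, hj⟩ : ∃ j, t j ≠ ∑ i ∈ range j, (t 2 - 1) ^ i := by
    by_contra! h
    exact hnot ⟨(t 2 - 1).toNat, by omega, fun n => by rw [h n, Int.toNat_of_nonneg (by omega)]⟩
  have hj_pos : 0 < j := Nat.pos_of_ne_zero (by rintro rfl; simp [h0] at hj)
  have habs := abs_nonneg (∑ i ∈ range j, (t 2 - 1) ^ i - t j)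
  refine ⟨j, hj_pos, (|∑ i ∈ range j, (t 2 - 1) ^ i - t j| + t 2 + 1).toNat, fun n hn => ?_⟩
  exact sub_one_mul_le_apply_add h0 h1 hdvd hmono hj_pos hj (by omega) (by omega)

theorem exists_sub_one_mul_le_apply_add (h0 : s 0 = 0)
    (hdvd : ∀ n k : ℕ, 0 < k → k < n → s (n - k) ∣ s n - s k) (hmono : StrictMono s)
    (hnot : ¬ ∃ (c : ℤ) (q : ℕ), 0 < q ∧ ∀ n : ℕ, s n = c * ∑ i ∈ range n, (q : ℤ) ^ i) :
    ∃ j > 0, ∃ N : ℕ, ∀ n ≥ N, ((n : ℤ) - 1) * s n ≤ s (n + j) := by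
  have hc : 0 < s 1 := h0 ▸ hmono one_pos
  choose t ht using apply_one_dvd_s14 h0 hdvd
  generalize hc1 : s 1 = c at ht hc
  have ht0 : t 0 = 0 := by simpa [h0, hc.ne'] using ht 0
  have ht1 : t 1 = 1 := by
    have := ht 1
    rw [hc1] at this
    exact (mul_eq_left₀ hc.ne').mp this.symm
  have htdvd : ∀ n k : ℕ, 0 < k → k < n → t (n - k) ∣ t n - t k := fun n k hk hkn => by
    have := hdvd n k hk hkn
    rwa [ht, ht n, ht k, ← mul_sub, mul_dvd_mul_iff_left hc.ne'] at this
  have htmono : StrictMono t := fun m n hmn => by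
    have := hmono hmn
    rw [ht, ht n] at this
    exact lt_of_mul_lt_mul_left this hc.le
  have htnot : ¬ ∃ q : ℕ, 0 < q ∧ ∀ n : ℕ, t n = ∑ i ∈ range n, (q : ℤ) ^ i :=
    fun ⟨q, hq, h⟩ => hnot ⟨c, q, hq, fun n => by rw [ht, h]⟩
  obtain ⟨j, hj, N, hN⟩ :=
    exists_sub_one_mul_le_apply_add_of_apply_one ht0 ht1 htdvd htmono htnot
  refine ⟨j, hj, N, fun n hn => ?_⟩
  rw [ht, ht, mul_left_comm]
  exact mul_le_mul_of_nonneg_left (hN n hn) hc.le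

end

theorem exists_pos_mul_pow_le_of_pow_mul_le {K : Type*} [Field K] [LinearOrder K]
    [IsStrictOrderedRing K] {f : ℕ → K} {a : K} {j N : ℕ} (ha : 1 ≤ a) (hj : 0 < j)
    (hf : ∀ n ≥ N, 1 ≤ f n) (hshift : ∀ n ≥ N, a ^ j * f n ≤ f (n + j)) :
    ∃ C : K, 0 < C ∧ ∀ n ≥ N, C * a ^ n ≤ f n := by
  have ha0 : 0 < a := zero_lt_one.trans_le ha
  refine ⟨(a ^ (N + j))⁻¹, by positivity, fun n hn => ?_⟩
  rw [inv_mul_le_iff₀ (by positivity)]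
  induction n using Nat.strong_induction_on with
  | _ n ih =>
    by_cases hn' : n < N + j
    · calc a ^ n ≤ a ^ (N + j) := pow_le_pow_right₀ ha hn'.le
        _ ≤ a ^ (N + j) * f n := le_mul_of_one_le_right (by positivity) (hf n hn)
    · obtain ⟨m, rfl⟩ : ∃ m, n = m + j := ⟨n - j, by omega⟩
      calc a ^ (m + j) = a ^ m * a ^ j := pow_add a m j
        _ ≤ a ^ (N + j) * f m * a ^ j :=
          mul_le_mul_of_nonneg_right (ih m (by omega) (by omega)) (by positivity)
        _ = a ^ (N + j) * (a ^ j * f m) := by ring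
        _ ≤ a ^ (N + j) * f (m + j) :=
          mul_le_mul_of_nonneg_left (hshift m (by omega)) (by positivity)

open Finset in
theorem GNS_growth_general (s : ℕ → ℤ)
    (h0 : s 0 = 0)
    (hdvd : ∀ n k : ℕ, 0 < k → k < n → s (n - k) ∣ s n - s k)
    (hmono : StrictMono s)
    (hnot : ¬ ∃ (c : ℤ) (q : ℕ), 0 < q ∧
      ∀ n : ℕ, s n = c * ∑ i ∈ range n, (q : ℤ) ^ i)
    (a : ℕ) :
    ∃ C : ℚ, 0 < C ∧ ∃ N : ℕ, ∀ n ≥ N, C * (a : ℚ) ^ n ≤ (s n : ℚ) := by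
  obtain ⟨j, hj, N, hN⟩ := exists_sub_one_mul_le_apply_add h0 hdvd hmono hnot
  set M := max N ((a + 1) ^ j + 1)
  have hle := natCast_le_of_strictMono h0 hmono
  have hf : ∀ n ≥ M, (1 : ℚ) ≤ s n := fun n hn => by
    exact_mod_cast (show (1 : ℤ) ≤ n by omega).trans (hle n)
  have hshift : ∀ n ≥ M, ((a : ℚ) + 1) ^ j * s n ≤ s (n + j) := fun n hn => by
    have hpow : ((a : ℤ) + 1) ^ j ≤ n - 1 := by
      have : (a + 1) ^ j + 1 ≤ n := by omega
      zify at this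
      linarith
    exact_mod_cast (mul_le_mul_of_nonneg_right hpow (by linarith [hle n])).trans
      (hN n (by omega))
  obtain ⟨C, hC, hCle⟩ := exists_pos_mul_pow_le_of_pow_mul_le (by simp) hj hf hshift
  refine ⟨C, hC, M, fun n hn => le_trans ?_ (hCle n hn)⟩
  gcongr
  linarith

open Finset in
/-- A strictly increasing generalized n-series over `ℤ` which is not a scalar
multiple of `n ↦ [n]_q` for any positive integer `q` grows faster than any
exponential: `s n = Ω(aⁿ)` for every `a ≥ 0`. -/
theorem GNS_growth (s : ℕ → ℤ)
    (h0 : s 0 = 0)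
    (hne : ∀ n : ℕ, 0 < n → s n ≠ 0)
    (hdvd : ∀ n k : ℕ, 0 < k → k < n → s (n - k) ∣ s n - s k)
    (hmono : StrictMono s)
    (hnot : ¬ ∃ (c : ℤ) (q : ℕ), 0 < q ∧
      ∀ n : ℕ, s n = c * ∑ i ∈ range n, (q : ℤ) ^ i)
    (a : ℕ) :
    ∃ C : ℚ, 0 < C ∧ ∃ N : ℕ, ∀ n ≥ N, C * (a : ℚ) ^ n ≤ (s n : ℚ) :=
  GNS_growth_general s h0 hdvd hmono hnot a
end

section
/- Let s be a generalized n-series over R and define the R-bilinear operation ⋆_s on R[x] by x^a ⋆_s x^b = c_s(a+b+1, a)·x^{a+b}, where c_s(n,k) = (s(n)-s(k))/s(n-k). Then the s-derivative ∇_s (the R-linear map with ∇_s(x^n) = s(n)x^{n-1}) satisfies the product rule ∇_s(fg) = ∇_s(f)·g + f ⋆_s ∇_s(g) for all f, g ∈ R[x]. -/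
/-! Both sides are `R`-bilinear in `(f, g)`, so it suffices to compare them on `X ^ a, X ^ b`.
There the identity reduces to `s (a + b + 1) = s a + s (b + 1) * c_s(a + b + 1, a)`, which is the
defining relation of `c_s`. -/

open Polynomial

theorem Polynomial.bilinear_ext_X_pow {R P : Type*} [CommRing R] [AddCommMonoid P] [Module R P]
    {B B' : R[X] →ₗ[R] R[X] →ₗ[R] P} (h : ∀ a b : ℕ, B (X ^ a) (X ^ b) = B' (X ^ a) (X ^ b)) :
    B = B' :=
  LinearMap.ext_basis (basisMonomials R) (basisMonomials R) fun a b => by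
    simpa only [coe_basisMonomials, ← X_pow_eq_monomial] using h a b

section ProductRule

variable {R : Type*} [CommRing R] {s : ℕ → R} {D : R[X] →ₗ[R] R[X]}

/-- Multiplying by `X` avoids the truncated exponent `a - 1` in `D (X ^ a) = s a • X ^ (a - 1)`. -/
theorem map_X_pow_mul_X (h0 : s 0 = 0) (hD0 : D 1 = 0)
    (hD : ∀ n : ℕ, D (X ^ (n + 1)) = s (n + 1) • X ^ n) (a : ℕ) :
    D (X ^ a) * X = s a • X ^ a := by
  cases a with
  | zero => simp [hD0, h0]
  | succ n => rw [hD n, smul_mul_assoc, ← pow_succ]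

theorem product_rule_X_pow (h0 : s 0 = 0) (hD0 : D 1 = 0)
    (hD : ∀ n : ℕ, D (X ^ (n + 1)) = s (n + 1) • X ^ n)
    {M : R[X] →ₗ[R] R[X] →ₗ[R] R[X]}
    (hM : ∀ a b : ℕ, ∃ c : R,
      s (b + 1) * c = s (a + b + 1) - s a ∧ M (X ^ a) (X ^ b) = c • X ^ (a + b)) (a b : ℕ) :
    D (X ^ a * X ^ b) = D (X ^ a) * X ^ b + M (X ^ a) (D (X ^ b)) := by
  cases b with
  | zero => simp [hD0]
  | succ m =>
    obtain ⟨c, hc, hMc⟩ := hM a m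
    have hDa : D (X ^ a) * X ^ (m + 1) = s a • X ^ (a + m) := by
      rw [pow_succ', ← mul_assoc, map_X_pow_mul_X h0 hD0 hD, smul_mul_assoc, ← pow_add]
    rw [← pow_add, ← add_assoc, hD, hDa, hD, map_smul, hMc, smul_smul, ← add_smul]
    congr 1
    linear_combination -hc

end ProductRule

open Polynomial in
theorem s_product_rule_general {R : Type*} [CommRing R] (s : ℕ → R)
    (h0 : s 0 = 0)
    (D : R[X] →ₗ[R] R[X]) (hD0 : D 1 = 0)
    (hD : ∀ n : ℕ, D (X ^ (n + 1)) = s (n + 1) • X ^ n)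
    (M : R[X] →ₗ[R] R[X] →ₗ[R] R[X])
    (hM : ∀ a b : ℕ, ∃ c : R,
      s (b + 1) * c = s (a + b + 1) - s a ∧ M (X ^ a) (X ^ b) = c • X ^ (a + b)) :
    ∀ f g : R[X], D (f * g) = D f * g + M f (D g) := by
  have hbilin : (LinearMap.mul R R[X]).compr₂ D = (LinearMap.mul R R[X]).comp D + M.compl₂ D :=
    bilinear_ext_X_pow fun a b => product_rule_X_pow h0 hD0 hD hM a b
  exact fun f g => LinearMap.congr_fun₂ hbilin f g

open Polynomial in
/-- The s-product rule: `∇_s (f g) = ∇_s f · g + f ⋆_s ∇_s g`, where `⋆_s` is the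
bilinear operation with `x^a ⋆_s x^b = c_s(a+b+1, a) x^(a+b)`. -/
theorem s_product_rule {R : Type*} [CommRing R] (s : ℕ → R)
    (h0 : s 0 = 0)
    (hreg : ∀ n : ℕ, 0 < n → s n ∈ nonZeroDivisors R)
    (hdvd : ∀ n k : ℕ, 0 < k → k < n → s (n - k) ∣ s n - s k)
    (D : R[X] →ₗ[R] R[X]) (hD0 : D 1 = 0)
    (hD : ∀ n : ℕ, D (X ^ (n + 1)) = s (n + 1) • X ^ n)
    (M : R[X] →ₗ[R] R[X] →ₗ[R] R[X])
    (hM : ∀ a b : ℕ, ∃ c : R,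
      s (b + 1) * c = s (a + b + 1) - s a ∧ M (X ^ a) (X ^ b) = c • X ^ (a + b)) :
    ∀ f g : R[X], D (f * g) = D f * g + M f (D g) :=
  s_product_rule_general s h0 D hD0 hD M hM
end

section
/- Let s be a generalized n-series over R such that s(1) is a unit in R/(s(p)) for a fixed p (e.g., s(1)=1). Then: (i) the kernel of the s-derivative ∇_s : R[x]/(s(p)) → R[x]/(s(p)) is the sub-R/(s(p))-module generated by {x^{np} : n ≥ 0}; (ii) the cokernel of ∇_s on R[x]/(s(p)) is free over R/(s(p)) with basis the classes of {x^{np-1}dx : n ≥ 1}. Equivalently, H⁰ and H¹ of the s-de Rham complex of the affine line modulo s(p) are each isomorphic to (R/(s(p)))[x^p]. -/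
/-!
Modulo `s p` the sequence `s` is `p`-periodic, because `s p ∣ s (m + p) - s m`. Hence it
vanishes on multiples of `p`, and when `s 1` is a unit it is a unit at every `m` prime to `p`:
pick `b` with `m * b ≡ 1 [MOD p]`, then `s m ∣ s (m * b) ≡ s 1`. So `∇_s` kills `x^{np}` and
sends every other monomial `x^{m+1}` to a unit multiple of `x^m`, and both the kernel and the
image are read off coefficientwise.
-/

namespace NSeries

variable {R : Type*} [CommRing R] {s : ℕ → R}

theorem dvd_add_sub (h0 : s 0 = 0)
    (hdvd : ∀ n k : ℕ, 0 < k → k < n → s (n - k) ∣ s n - s k) (m p : ℕ) :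
    s p ∣ s (m + p) - s m := by
  rcases Nat.eq_zero_or_pos m with rfl | hm
  · simp [h0]
  rcases Nat.eq_zero_or_pos p with rfl | hp
  · simp
  simpa using hdvd (m + p) m hm (by omega)

theorem periodic_mk (h0 : s 0 = 0)
    (hdvd : ∀ n k : ℕ, 0 < k → k < n → s (n - k) ∣ s n - s k) (p : ℕ) :
    Function.Periodic (fun n => Ideal.Quotient.mk (Ideal.span {s p}) (s n)) p := fun m =>
  Ideal.Quotient.eq.2 (Ideal.mem_span_singleton.2 (dvd_add_sub h0 hdvd m p))

theorem mk_mod (h0 : s 0 = 0)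
    (hdvd : ∀ n k : ℕ, 0 < k → k < n → s (n - k) ∣ s n - s k) (p m : ℕ) :
    Ideal.Quotient.mk (Ideal.span {s p}) (s m)
      = Ideal.Quotient.mk (Ideal.span {s p}) (s (m % p)) := by
  simpa [Nat.mod_add_div'] using ((periodic_mk h0 hdvd p).nat_mul (m / p)) (m % p)

theorem dvd_of_dvd (h0 : s 0 = 0)
    (hdvd : ∀ n k : ℕ, 0 < k → k < n → s (n - k) ∣ s n - s k) {k n : ℕ} (h : k ∣ n) :
    s k ∣ s n := by
  obtain ⟨q, rfl⟩ := h
  have := (periodic_mk h0 hdvd k).nat_mul_eq q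
  rwa [h0, map_zero, Ideal.Quotient.eq_zero_iff_mem, Ideal.mem_span_singleton, mul_comm] at this

theorem isUnit_mk_of_coprime (h0 : s 0 = 0)
    (hdvd : ∀ n k : ℕ, 0 < k → k < n → s (n - k) ∣ s n - s k) {p m : ℕ}
    (h1 : IsUnit (Ideal.Quotient.mk (Ideal.span {s p}) (s 1))) (hm : m.Coprime p) :
    IsUnit (Ideal.Quotient.mk (Ideal.span {s p}) (s m)) := by
  obtain rfl | hp := eq_or_ne p 0
  · rwa [(Nat.coprime_zero_right m).1 hm]
  obtain ⟨b, -, hb⟩ := Nat.exists_mul_mod_eq_of_coprime 1 hm hp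
  refine isUnit_of_dvd_unit (map_dvd _ (dvd_of_dvd h0 hdvd (dvd_mul_right m b))) ?_
  rwa [mk_mod h0 hdvd, hb, ← mk_mod h0 hdvd]

end NSeries

namespace Polynomial

variable {A : Type*}

theorem mem_span_X_pow_iff [Semiring A] (P : ℕ → Prop) (f : A[X]) :
    f ∈ Submodule.span A {g : A[X] | ∃ m, P m ∧ g = X ^ m} ↔
      ∀ m, ¬ P m → f.coeff m = 0 := by
  constructor
  · intro hf
    induction hf using Submodule.span_induction with
    | mem g hg =>
      obtain ⟨i, hi, rfl⟩ := hg
      intro m hm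
      rw [coeff_X_pow, if_neg (by rintro rfl; exact hm hi)]
    | zero => simp
    | add f g _ _ hf hg => intro m hm; simp [hf m hm, hg m hm]
    | smul a f _ hf => intro m hm; simp [hf m hm]
  · intro hf
    rw [f.as_sum_support]
    refine Submodule.sum_mem _ fun i hi => ?_
    rw [← smul_X_eq_monomial]
    refine Submodule.smul_mem _ _ (Submodule.subset_span ⟨i, ?_, rfl⟩)
    by_contra h
    exact mem_support_iff.1 hi (hf i h)

variable [CommSemiring A] {c : ℕ → A} {D : A[X] →ₗ[A] A[X]}

theorem coeff_apply_eq_mul_coeff_succ (hD0 : D 1 = 0)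
    (hDX : ∀ n : ℕ, D (X ^ (n + 1)) = c (n + 1) • X ^ n) (f : A[X]) (n : ℕ) :
    (D f).coeff n = c (n + 1) * f.coeff (n + 1) := by
  induction f using Polynomial.induction_on' with
  | add f g hf hg => simp [hf, hg, mul_add]
  | monomial i a =>
    rw [← smul_X_eq_monomial, map_smul]
    cases i with
    | zero => simp [hD0, coeff_one]
    | succ i =>
      rw [hDX i]
      simp only [coeff_smul, coeff_X_pow, smul_eq_mul, add_left_inj]
      split_ifs <;> simp_all [mul_comm]

theorem ker_eq_span_X_pow_mul (hD0 : D 1 = 0)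
    (hDX : ∀ n : ℕ, D (X ^ (n + 1)) = c (n + 1) • X ^ n) {p : ℕ}
    (hzero : ∀ m, p ∣ m → c m = 0) (hunit : ∀ m, ¬ p ∣ m → IsUnit (c m)) :
    LinearMap.ker D = Submodule.span A (Set.range fun n : ℕ => (X : A[X]) ^ (n * p)) := by
  have hrange :
      (Set.range fun n : ℕ => (X : A[X]) ^ (n * p)) = {g | ∃ m, p ∣ m ∧ g = X ^ m} := by
    ext g
    constructor
    · rintro ⟨n, rfl⟩
      exact ⟨n * p, dvd_mul_left p n, rfl⟩
    · rintro ⟨_, ⟨n, rfl⟩, rfl⟩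
      exact ⟨n, by rw [mul_comm]⟩
  ext f
  rw [hrange, mem_span_X_pow_iff, LinearMap.mem_ker, Polynomial.ext_iff]
  simp only [coeff_apply_eq_mul_coeff_succ hD0 hDX, coeff_zero]
  constructor
  · intro hf m hm
    have hm0 : m ≠ 0 := by rintro rfl; exact hm (dvd_zero p)
    obtain ⟨n, rfl⟩ := Nat.exists_eq_succ_of_ne_zero hm0
    exact (hunit _ hm).mul_right_eq_zero.1 (hf n)
  · intro hf n
    by_cases hn : p ∣ n + 1
    · rw [hzero _ hn, zero_mul]
    · rw [hf _ hn, mul_zero]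

theorem range_eq_span_X_pow (hD0 : D 1 = 0)
    (hDX : ∀ n : ℕ, D (X ^ (n + 1)) = c (n + 1) • X ^ n) {p : ℕ}
    (hzero : ∀ m, p ∣ m → c m = 0) (hunit : ∀ m, ¬ p ∣ m → IsUnit (c m)) :
    LinearMap.range D = Submodule.span A {g : A[X] | ∃ m, ¬ p ∣ m + 1 ∧ g = X ^ m} := by
  apply le_antisymm
  · rintro _ ⟨f, rfl⟩
    rw [mem_span_X_pow_iff]
    intro m hm
    rw [coeff_apply_eq_mul_coeff_succ hD0 hDX, hzero _ (not_not.1 hm), zero_mul]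
  · rw [Submodule.span_le]
    rintro _ ⟨m, hm, rfl⟩
    obtain ⟨u, hu⟩ := hunit (m + 1) hm
    refine ⟨(↑u⁻¹ : A) • X ^ (m + 1), ?_⟩
    rw [map_smul, hDX, smul_smul, ← hu, Units.inv_mul, one_smul]

end Polynomial

open Polynomial in
theorem s_cartier_general {R : Type*} [CommRing R] (s : ℕ → R)
    (h0 : s 0 = 0)
    (hdvd : ∀ n k : ℕ, 0 < k → k < n → s (n - k) ∣ s n - s k)
    (p : ℕ) (hp : p.Prime)
    (h1 : IsUnit (Ideal.Quotient.mk (Ideal.span {s p}) (s 1)))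
    (D : Polynomial (R ⧸ Ideal.span {s p}) →ₗ[R ⧸ Ideal.span {s p}]
          Polynomial (R ⧸ Ideal.span {s p}))
    (hD0 : D 1 = 0)
    (hDX : ∀ n : ℕ, D (X ^ (n + 1)) = Ideal.Quotient.mk (Ideal.span {s p}) (s (n + 1)) • X ^ n) :
    LinearMap.ker D
      = Submodule.span (R ⧸ Ideal.span {s p})
          (Set.range fun n : ℕ => (X : Polynomial (R ⧸ Ideal.span {s p})) ^ (n * p)) ∧
    LinearMap.range D
      = Submodule.span (R ⧸ Ideal.span {s p})
          {f : Polynomial (R ⧸ Ideal.span {s p}) | ∃ m : ℕ, ¬ p ∣ (m + 1) ∧ f = X ^ m} := by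
  have hzero : ∀ m, p ∣ m → Ideal.Quotient.mk (Ideal.span {s p}) (s m) = 0 := fun _ hm =>
    Ideal.Quotient.eq_zero_iff_mem.2 (Ideal.mem_span_singleton.2 (NSeries.dvd_of_dvd h0 hdvd hm))
  have hunit : ∀ m, ¬ p ∣ m → IsUnit (Ideal.Quotient.mk (Ideal.span {s p}) (s m)) :=
    fun _ hm =>
      NSeries.isUnit_mk_of_coprime h0 hdvd h1 (Nat.coprime_comm.1 (hp.coprime_iff_not_dvd.2 hm))
  exact ⟨ker_eq_span_X_pow_mul hD0 hDX hzero hunit, range_eq_span_X_pow hD0 hDX hzero hunit⟩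

open Polynomial in
/-- The s-Cartier isomorphism for the affine line: modulo `s p`, the kernel of the
s-derivative on `R[x]/(s p)` is spanned by the powers `x^{np}`, and its image (so
that the cokernel, i.e. `H¹`, is free on the classes of `x^{np-1} dx`) is spanned
by the monomials `x^m` with `p ∤ m + 1`. -/
theorem s_cartier {R : Type*} [CommRing R] (s : ℕ → R)
    (h0 : s 0 = 0)
    (hreg : ∀ n : ℕ, 0 < n → s n ∈ nonZeroDivisors R)
    (hdvd : ∀ n k : ℕ, 0 < k → k < n → s (n - k) ∣ s n - s k)
    (p : ℕ) (hp : p.Prime)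
    (h1 : IsUnit (Ideal.Quotient.mk (Ideal.span {s p}) (s 1)))
    (D : Polynomial (R ⧸ Ideal.span {s p}) →ₗ[R ⧸ Ideal.span {s p}]
          Polynomial (R ⧸ Ideal.span {s p}))
    (hD0 : D 1 = 0)
    (hDX : ∀ n : ℕ, D (X ^ (n + 1)) = Ideal.Quotient.mk (Ideal.span {s p}) (s (n + 1)) • X ^ n) :
    LinearMap.ker D
      = Submodule.span (R ⧸ Ideal.span {s p})
          (Set.range fun n : ℕ => (X : Polynomial (R ⧸ Ideal.span {s p})) ^ (n * p)) ∧
    LinearMap.range D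
      = Submodule.span (R ⧸ Ideal.span {s p})
          {f : Polynomial (R ⧸ Ideal.span {s p}) | ∃ m : ℕ, ¬ p ∣ (m + 1) ∧ f = X ^ m} :=
  s_cartier_general s h0 hdvd p hp h1 D hD0 hDX
end

section
/- Let F(x,y) ∈ R⟦x,y⟧ be a (one-dimensional, commutative) formal group law over a commutative ring R such that the n-series [n]_F(t) ∈ R⟦t⟧ is not a zero-divisor for any n > 0. Then the function s : ℕ → R⟦t⟧ given by s(n) = [n]_F(t) is a generalized n-series over R⟦t⟧: s(0) = 0, each s(n) (n>0) is a non-zero-divisor, and s(n-k) divides s(n) - s(k) in R⟦t⟧ for all n > k > 0. The same holds for s_F(n) = [n]_F(t)/t. -/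
/-!
Write `G(a) = F(t, a)`, so that `[n+1] = G([n])`. By induction on `k`, `[n-k] ∣ [n] - [k]` follows
from `[n] - [k] ∣ G([n]) - G([k])`, i.e. from `a - b ∣ G(a) - G(b)` for `a, b ∈ t R⟦t⟧`. Now
`G(a) - G(b) = ∑ F_ij t^i (a^j - b^j)` and `a^j - b^j = (a - b) ∑_l a^l b^(j-1-l)`, where the
geometric sum has `t`-adic order at least `j - 1`; so the termwise quotients sum `t`-adically to
one quotient. Cancelling `t` gives the statement for `⟨n⟩ = [n]/t`.
-/

/-- Substitution of two multivariate power series (with vanishing constant terms) into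
a two-variable power series `F ∈ R⟦x,y⟧`: the coefficient of `F(g₁,g₂)` at a monomial
`d` only involves `F_{ij} · coeff d (g₁^i g₂^j)` for `i + j ≤ |d|`. -/
noncomputable def subst2 {R : Type*} [CommRing R] {σ : Type*}
    (F : MvPowerSeries (Fin 2) R) (g₁ g₂ : MvPowerSeries σ R) : MvPowerSeries σ R :=
  fun d : σ →₀ ℕ =>
    ∑ i ∈ Finset.range (d.sum (fun _ n => n) + 1),
      ∑ j ∈ Finset.range (d.sum (fun _ n => n) + 1),
        MvPowerSeries.coeff (Finsupp.single 0 i + Finsupp.single 1 j) F *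
          MvPowerSeries.coeff d (g₁ ^ i * g₂ ^ j)

open PowerSeries Finset

theorem PowerSeries.exists_forall_X_pow_dvd_sub {R : Type*} [Ring R] (Q : ℕ → R⟦X⟧)
    (hQ : ∀ N, X ^ N ∣ Q (N + 1) - Q N) : ∃ q : R⟦X⟧, ∀ N, X ^ N ∣ q - Q N := by
  have stable : ∀ m k, coeff m (Q (m + 1 + k)) = coeff m (Q (m + 1)) := by
    intro m k
    induction k with
    | zero => rfl
    | succ k ih =>
      rw [← ih, ← sub_eq_zero, ← map_sub, ← add_assoc]
      exact X_pow_dvd_iff.mp (hQ _) m (by omega)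
  refine ⟨mk fun m => coeff m (Q (m + 1)), fun N => X_pow_dvd_iff.mpr fun m hm => ?_⟩
  obtain ⟨k, rfl⟩ := Nat.exists_eq_add_of_le hm
  rw [map_sub, coeff_mk, stable, sub_self]

theorem PowerSeries.dvd_of_forall_X_pow_dvd_sub_mul {R : Type*} [CommRing R] {d g : R⟦X⟧}
    (Q : ℕ → R⟦X⟧) (hQ : ∀ N, X ^ N ∣ Q (N + 1) - Q N) (hg : ∀ N, X ^ N ∣ g - d * Q N) :
    d ∣ g := by
  obtain ⟨q, hq⟩ := exists_forall_X_pow_dvd_sub Q hQ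
  refine ⟨q, ext fun n => ?_⟩
  have hX : X ^ (n + 1) ∣ g - d * q := by
    have := dvd_sub (hg (n + 1)) ((hq (n + 1)).mul_left d)
    rwa [mul_sub, sub_sub_sub_cancel_right] at this
  exact sub_eq_zero.mp (X_pow_dvd_iff.mp hX n n.lt_succ_self)

theorem pow_dvd_geom_sum₂ {α : Type*} [CommSemiring α] {x a b : α} (ha : x ∣ a) (hb : x ∣ b)
    (n : ℕ) : x ^ (n - 1) ∣ ∑ l ∈ range n, a ^ l * b ^ (n - 1 - l) := by
  refine dvd_sum fun l hl => ?_
  have hl' : l ≤ n - 1 := by have := mem_range.mp hl; omega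
  have := mul_dvd_mul (pow_dvd_pow_of_dvd ha l) (pow_dvd_pow_of_dvd hb (n - 1 - l))
  rwa [← pow_add, Nat.add_sub_cancel' hl'] at this

theorem MvPowerSeries.constantCoeff_eq_zero_of_sub_X_sub_X_mem {σ R : Type*} [CommRing R]
    {F : MvPowerSeries σ R} {i j : σ}
    (h : F - X i - X j ∈ Ideal.span {(X i : MvPowerSeries σ R), X j} ^ 2) :
    constantCoeff F = 0 := by
  have hker : Ideal.span {(X i : MvPowerSeries σ R), X j} ≤ RingHom.ker constantCoeff := by
    rw [Ideal.span_le, Set.insert_subset_iff, Set.singleton_subset_iff]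
    simp [RingHom.mem_ker]
  simpa [RingHom.mem_ker] using hker (Ideal.pow_le_self two_ne_zero h)

theorem dvd_sub_of_sub_dvd_sub_succ {A : Type*} [Ring A] {s : ℕ → A} (h0 : s 0 = 0)
    (hsucc : ∀ n k, s n - s k ∣ s (n + 1) - s (k + 1)) {n k : ℕ} (hkn : k ≤ n) :
    s (n - k) ∣ s n - s k := by
  induction k generalizing n with
  | zero => simp [h0]
  | succ k ih =>
    obtain ⟨m, rfl⟩ : ∃ m, n = m + 1 := ⟨n - 1, by omega⟩
    rw [Nat.add_sub_add_right]
    exact (ih (by omega)).trans (hsucc m k)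

section Subst2

variable {R : Type*} [CommRing R]

noncomputable def truncSubst2 (F : MvPowerSeries (Fin 2) R) (N : ℕ) (g₁ g₂ : R⟦X⟧) : R⟦X⟧ :=
  ∑ p ∈ range (N + 1) ×ˢ range (N + 1),
    C (MvPowerSeries.coeff (Finsupp.single 0 p.1 + Finsupp.single 1 p.2) F) * g₁ ^ p.1 * g₂ ^ p.2

theorem coeff_subst2 (F : MvPowerSeries (Fin 2) R) (g₁ g₂ : R⟦X⟧) (n : ℕ) :
    coeff n (subst2 F g₁ g₂) = coeff n (truncSubst2 F n g₁ g₂) := by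
  show subst2 F g₁ g₂ (Finsupp.single () n) = _
  simp [subst2, truncSubst2, sum_product, mul_assoc, coeff_C_mul, map_sum]

theorem constantCoeff_subst2 (F : MvPowerSeries (Fin 2) R) (g₁ g₂ : R⟦X⟧) :
    constantCoeff (subst2 F g₁ g₂) = MvPowerSeries.constantCoeff F := by
  rw [← coeff_zero_eq_constantCoeff_apply, coeff_subst2]
  simp [truncSubst2]

theorem coeff_truncSubst2_of_le (F : MvPowerSeries (Fin 2) R) {g₁ g₂ : R⟦X⟧} (h₁ : X ∣ g₁)
    (h₂ : X ∣ g₂) {m N : ℕ} (hmN : m ≤ N) :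
    coeff m (truncSubst2 F N g₁ g₂) = coeff m (truncSubst2 F m g₁ g₂) := by
  simp only [truncSubst2, map_sum]
  refine (sum_subset (product_subset_product (range_subset_range.2 (by omega))
    (range_subset_range.2 (by omega))) fun p _ hp => ?_).symm
  have hdeg : m < p.1 + p.2 := by simp only [mem_product, mem_range, not_and_or] at hp; omega
  have hX : X ^ (p.1 + p.2) ∣ g₁ ^ p.1 * g₂ ^ p.2 := by
    rw [pow_add]; exact mul_dvd_mul (pow_dvd_pow_of_dvd h₁ _) (pow_dvd_pow_of_dvd h₂ _)
  rw [mul_assoc, coeff_C_mul, X_pow_dvd_iff.mp hX m hdeg, mul_zero]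

theorem X_pow_succ_dvd_subst2_sub_truncSubst2 (F : MvPowerSeries (Fin 2) R) {g₁ g₂ : R⟦X⟧}
    (h₁ : X ∣ g₁) (h₂ : X ∣ g₂) (N : ℕ) :
    X ^ (N + 1) ∣ subst2 F g₁ g₂ - truncSubst2 F N g₁ g₂ :=
  X_pow_dvd_iff.mpr fun m hm => by
    rw [map_sub, coeff_subst2, coeff_truncSubst2_of_le F h₁ h₂ (Nat.lt_succ_iff.mp hm), sub_self]

noncomputable def truncSubst2Quot (F : MvPowerSeries (Fin 2) R) (N : ℕ) (g a b : R⟦X⟧) :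
    R⟦X⟧ :=
  ∑ p ∈ range (N + 1) ×ˢ range (N + 1),
    C (MvPowerSeries.coeff (Finsupp.single 0 p.1 + Finsupp.single 1 p.2) F) * g ^ p.1 *
      ∑ l ∈ range p.2, a ^ l * b ^ (p.2 - 1 - l)

theorem truncSubst2_sub_truncSubst2 (F : MvPowerSeries (Fin 2) R) (N : ℕ) (g a b : R⟦X⟧) :
    truncSubst2 F N g a - truncSubst2 F N g b = (a - b) * truncSubst2Quot F N g a b := by
  rw [truncSubst2, truncSubst2, truncSubst2Quot, ← sum_sub_distrib, mul_sum]
  refine sum_congr rfl fun p _ => ?_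
  rw [mul_left_comm, (Commute.all a b).mul_geom_sum₂, mul_sub]

theorem X_pow_dvd_truncSubst2Quot_succ_sub (F : MvPowerSeries (Fin 2) R) {g a b : R⟦X⟧}
    (hg : X ∣ g) (ha : X ∣ a) (hb : X ∣ b) (N : ℕ) :
    X ^ N ∣ truncSubst2Quot F (N + 1) g a b - truncSubst2Quot F N g a b := by
  rw [truncSubst2Quot, truncSubst2Quot, ← sum_sdiff (product_subset_product
    (range_subset_range.2 (N + 1).le_succ) (range_subset_range.2 (N + 1).le_succ)),
    add_sub_cancel_right]
  refine dvd_sum fun p hp => ?_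
  simp only [mem_sdiff, mem_product, mem_range, not_and_or] at hp
  rcases le_or_gt (N + 1) p.1 with h | h
  · exact (((pow_dvd_pow X (by omega)).trans (pow_dvd_pow_of_dvd hg p.1)).mul_left _).mul_right _
  · exact ((pow_dvd_pow X (by omega)).trans (pow_dvd_geom_sum₂ ha hb p.2)).mul_left _

theorem sub_dvd_subst2_sub_subst2 (F : MvPowerSeries (Fin 2) R) {g a b : R⟦X⟧} (hg : X ∣ g)
    (ha : X ∣ a) (hb : X ∣ b) : a - b ∣ subst2 F g a - subst2 F g b := by
  refine dvd_of_forall_X_pow_dvd_sub_mul (truncSubst2Quot F · g a b)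
    (X_pow_dvd_truncSubst2Quot_succ_sub F hg ha hb) fun N => ?_
  rw [← truncSubst2_sub_truncSubst2, sub_sub_sub_comm]
  exact (pow_dvd_pow X N.le_succ).trans
    (dvd_sub (X_pow_succ_dvd_subst2_sub_truncSubst2 F hg ha N)
      (X_pow_succ_dvd_subst2_sub_truncSubst2 F hg hb N))

end Subst2

theorem fgl_nseries_GNS_general {R : Type*} [CommRing R]
    (F : MvPowerSeries (Fin 2) R)
    -- F(x,y) ≡ x + y mod (x,y)²
    (hlin : F - MvPowerSeries.X 0 - MvPowerSeries.X 1 ∈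
      (Ideal.span {(MvPowerSeries.X 0 : MvPowerSeries (Fin 2) R),
        MvPowerSeries.X 1}) ^ 2)
    -- the n-series: [0]_F = 0, [n+1]_F = F(t, [n]_F)
    (ns : ℕ → PowerSeries R)
    (hns0 : ns 0 = 0)
    (hnsrec : ∀ n : ℕ, ns (n + 1) = subst2 F PowerSeries.X (ns n)) :
    (∀ n k : ℕ, 0 < k → k < n → ns (n - k) ∣ ns n - ns k) ∧
    (∀ d : ℕ → PowerSeries R, (∀ n : ℕ, ns n = PowerSeries.X * d n) →
      (∀ n : ℕ, 0 < n → d n ∈ nonZeroDivisors (PowerSeries R)) →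
      d 0 = 0 ∧ ∀ n k : ℕ, 0 < k → k < n → d (n - k) ∣ d n - d k) := by
  have hF : MvPowerSeries.constantCoeff F = 0 :=
    MvPowerSeries.constantCoeff_eq_zero_of_sub_X_sub_X_mem hlin
  have hX : ∀ n, X ∣ ns n := by
    rintro (_ | n)
    · simp [hns0]
    · rw [hnsrec, X_dvd_iff, constantCoeff_subst2, hF]
  have hdvd : ∀ n k, k ≤ n → ns (n - k) ∣ ns n - ns k := fun n k =>
    dvd_sub_of_sub_dvd_sub_succ hns0 fun n k => by
      simpa only [hnsrec] using sub_dvd_subst2_sub_subst2 F dvd_rfl (hX n) (hX k)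
  refine ⟨fun n k _ hkn => hdvd n k hkn.le, fun d hd _ => ⟨X_mul_cancel ?_, fun n k _ hkn => ?_⟩⟩
  · rw [← hd, hns0, mul_zero]
  · obtain ⟨e, he⟩ := hdvd n k hkn.le
    exact ⟨e, X_mul_cancel (by rw [mul_sub, ← hd, ← hd, he, hd, mul_assoc])⟩

/-- For a formal group law `F` over `R` whose n-series `[n]_F` are non-zero-divisors,
the functions `n ↦ [n]_F(t)` and `n ↦ ⟨n⟩_F(t) = [n]_F(t)/t` are generalized
n-series over `R⟦t⟧`. -/
theorem fgl_nseries_GNS {R : Type*} [CommRing R]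
    (F : MvPowerSeries (Fin 2) R)
    -- F(x,y) ≡ x + y mod (x,y)²
    (hlin : F - MvPowerSeries.X 0 - MvPowerSeries.X 1 ∈
      (Ideal.span {(MvPowerSeries.X 0 : MvPowerSeries (Fin 2) R),
        MvPowerSeries.X 1}) ^ 2)
    -- associativity F(F(x,y),z) = F(x,F(y,z))
    (hassoc :
      subst2 F (subst2 F (MvPowerSeries.X 0) (MvPowerSeries.X 1))
          ((MvPowerSeries.X 2 : MvPowerSeries (Fin 3) R))
        = subst2 F (MvPowerSeries.X 0)
            (subst2 F (MvPowerSeries.X 1) (MvPowerSeries.X 2)))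
    -- the n-series: [0]_F = 0, [n+1]_F = F(t, [n]_F)
    (ns : ℕ → PowerSeries R)
    (hns0 : ns 0 = 0)
    (hnsrec : ∀ n : ℕ, ns (n + 1) = subst2 F PowerSeries.X (ns n))
    -- each [n]_F, n > 0, is a non-zero-divisor
    (hreg : ∀ n : ℕ, 0 < n → ns n ∈ nonZeroDivisors (PowerSeries R)) :
    (∀ n k : ℕ, 0 < k → k < n → ns (n - k) ∣ ns n - ns k) ∧
    (∀ d : ℕ → PowerSeries R, (∀ n : ℕ, ns n = PowerSeries.X * d n) →
      (∀ n : ℕ, 0 < n → d n ∈ nonZeroDivisors (PowerSeries R)) →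
      d 0 = 0 ∧ ∀ n k : ℕ, 0 < k → k < n → d (n - k) ∣ d n - d k) :=
  fgl_nseries_GNS_general F hlin ns hns0 hnsrec
end
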